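/- arXiv:1907.01145 — 4 statements merged into one kernel-verified Lean document; each statement's English description precedes it below -/
import Mathlib

section
/- Let d ≤ k and let X, X̃ ∈ ℝ^{d×k} both have full rank d. Then min over orthogonal Q ∈ ℝ^{d×d} of ‖X − Q X̃‖_F is at most (1/√(2(√2 − 1))) · (1/σ_d(X)) · ‖XᵀX − X̃ᵀX̃‖_F. -/
open Matrix

/-- Squared-sum (Euclidean) norm of a vector. -/
noncomputable def euclNorm {n : ℕ} (v : Fin n → ℝ) : ℝ :=
  Real.sqrt (∑ i, (v i) ^ 2)

/-- Frobenius norm of a matrix. -/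
noncomputable def frobNorm {m n : ℕ} (A : Matrix (Fin m) (Fin n) ℝ) : ℝ :=
  Real.sqrt (∑ i, ∑ j, (A i j) ^ 2)

/-- The smallest (d-th) singular value of `X ∈ ℝ^{d×k}` (for `d ≤ k`),
characterized variationally as `min_{‖u‖=1} ‖Xᵀ u‖`. -/
noncomputable def sigmaMin {d k : ℕ} (X : Matrix (Fin d) (Fin k) ℝ) : ℝ :=
  sInf {r | ∃ u : Fin d → ℝ, euclNorm u = 1 ∧ r = euclNorm (Matrix.vecMul u X)}

/-- The Procrustes distance: `min` over orthogonal `Q` of `‖X − Q X̃‖_F`. -/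
noncomputable def rho {d k : ℕ} (X Y : Matrix (Fin d) (Fin k) ℝ) : ℝ :=
  sInf {r | ∃ Q : Matrix (Fin d) (Fin d) ℝ, Qᵀ * Q = 1 ∧ r = frobNorm (X - Q * Y)}

namespace Procrustes


/-- quadratic form u ᵀ B v -/
def qf {d : ℕ} (B : Matrix (Fin d) (Fin d) ℝ) (u v : Fin d → ℝ) : ℝ :=
  ∑ i, u i * ∑ j, B i j * v j

lemma trace_mul_eq_sum {d : ℕ} (A B : Matrix (Fin d) (Fin d) ℝ) :
    trace (A * B) = ∑ i, ∑ j, A i j * B j i := by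
  simp [Matrix.trace, Matrix.mul_apply, Matrix.diag]

lemma sum_two_support {n : ℕ} {i j : Fin n} (hij : i ≠ j) (c s : ℝ) (g : Fin n → ℝ) :
    ∑ l, (if l = i then c else if l = j then s else 0) * g l = c * g i + s * g j := by
  have h : ∀ l : Fin n, (if l = i then c else if l = j then s else 0) * g l
      = (if l = i then c * g i else 0) + (if l = j then s * g j else 0) := by
    intro l
    by_cases h1 : l = i
    · subst h1; simp [hij]
    · by_cases h2 : l = j
      · subst h2; simp [h1]
      · simp [h1, h2]
  rw [Finset.sum_congr rfl fun l _ => h l, Finset.sum_add_distrib]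
  simp

lemma trace_conj {d k : ℕ} (A : Matrix (Fin d) (Fin k) ℝ) (N : Matrix (Fin d) (Fin d) ℝ) :
    trace (Aᵀ * N * A) = ∑ j, qf N (fun i => A i j) (fun i => A i j) := by
  simp only [Matrix.trace, Matrix.diag, Matrix.mul_apply, qf, Matrix.transpose_apply,
    Finset.sum_mul, Finset.mul_sum]
  rw [Finset.sum_congr rfl fun j _ => Finset.sum_comm]
  apply Finset.sum_congr rfl; intro j _
  apply Finset.sum_congr rfl; intro b _
  apply Finset.sum_congr rfl; intro a _
  ring


lemma trace_CS {d : ℕ} (H S : Matrix (Fin d) (Fin d) ℝ) (hS : Sᵀ = S) :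
    trace (H * S) ≤ Real.sqrt (∑ i, ∑ j, (H i j)^2) * Real.sqrt (∑ i, ∑ j, (S i j)^2) := by
  have h1 : trace (H * S) = ∑ i, ∑ j, H i j * S i j := by
    simp only [Matrix.trace, Matrix.diag, Matrix.mul_apply]
    apply Finset.sum_congr rfl; intro i _
    apply Finset.sum_congr rfl; intro j _
    rw [show S j i = Sᵀ i j from rfl, hS]
  have cs := Finset.sum_mul_sq_le_sq_mul_sq (Finset.univ ×ˢ Finset.univ)
    (fun p : Fin d × Fin d => H p.1 p.2) (fun p : Fin d × Fin d => S p.1 p.2)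
  rw [Finset.sum_product' (f := fun i j => H i j * S i j),
      Finset.sum_product' (f := fun i j => (H i j)^2),
      Finset.sum_product' (f := fun i j => (S i j)^2)] at cs
  have hx : (0:ℝ) ≤ ∑ i, ∑ j, (H i j)^2 :=
    Finset.sum_nonneg fun i _ => Finset.sum_nonneg fun j _ => sq_nonneg _
  rw [h1]
  calc (∑ i, ∑ j, H i j * S i j)
      ≤ |∑ i, ∑ j, H i j * S i j| := le_abs_self _
    _ = Real.sqrt ((∑ i, ∑ j, H i j * S i j)^2) := (Real.sqrt_sq_eq_abs _).symm
    _ ≤ Real.sqrt ((∑ i, ∑ j, (H i j)^2) * ∑ i, ∑ j, (S i j)^2) := Real.sqrt_le_sqrt cs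
    _ = _ := Real.sqrt_mul hx _

lemma scalar_key (r gn sn hm hs : ℝ) (hr2 : r^2 = 2) (hr1 : 1 ≤ r) (hrle : r ≤ 2)
    (h1 : hs ≤ hm) (h2 : hs ≤ gn * sn) :
    (2*r - 2) * hm ≤ 2*sn^2 + 2*hm - 4*hs + gn^2 := by
  have e : (r^2 - 2) * gn^2 = 0 := by rw [hr2]; ring
  nlinarith [sq_nonneg (sn - r/2*gn), mul_nonneg (by linarith : (0:ℝ) ≤ 2*r) (by linarith : 0 ≤ gn*sn - hs),
    mul_nonneg (by linarith : (0:ℝ) ≤ 4 - 2*r) (by linarith : 0 ≤ hm - hs)]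


variable {d k : ℕ}

lemma trace_identity (E X : Matrix (Fin d) (Fin k) ℝ) (hsym : E * Xᵀ = X * Eᵀ) :
    trace ((Xᵀ*E + Eᵀ*X - Eᵀ*E) * (Xᵀ*E + Eᵀ*X - Eᵀ*E)) =
      2*trace ((E*Eᵀ)*(X*Xᵀ)) + 2*trace ((X*Eᵀ)*(X*Eᵀ))
      - 4*trace ((E*Eᵀ)*(X*Eᵀ)) + trace ((E*Eᵀ)*(E*Eᵀ)) := by
  have expand : (Xᵀ*E + Eᵀ*X - Eᵀ*E) * (Xᵀ*E + Eᵀ*X - Eᵀ*E) =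
      (Xᵀ*E)*(Xᵀ*E) + (Xᵀ*E)*(Eᵀ*X) + (Eᵀ*X)*(Xᵀ*E) + (Eᵀ*X)*(Eᵀ*X)
      - (Xᵀ*E)*(Eᵀ*E) - (Eᵀ*E)*(Xᵀ*E) - (Eᵀ*X)*(Eᵀ*E) - (Eᵀ*E)*(Eᵀ*X)
      + (Eᵀ*E)*(Eᵀ*E) := by noncomm_ring
  rw [expand]
  have tra : trace ((Xᵀ*E)*(Xᵀ*E)) = trace ((X*Eᵀ)*(X*Eᵀ)) := by
    rw [Matrix.mul_assoc Xᵀ E, trace_mul_comm, ← hsym]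
    simp only [Matrix.mul_assoc]
  have trb : trace ((Eᵀ*X)*(Eᵀ*X)) = trace ((X*Eᵀ)*(X*Eᵀ)) := by
    rw [Matrix.mul_assoc Eᵀ X, trace_mul_comm]
    simp only [Matrix.mul_assoc]
  have trab : trace ((Xᵀ*E)*(Eᵀ*X)) = trace ((E*Eᵀ)*(X*Xᵀ)) := by
    rw [Matrix.mul_assoc Xᵀ E, trace_mul_comm]
    simp only [Matrix.mul_assoc]
  have trba : trace ((Eᵀ*X)*(Xᵀ*E)) = trace ((E*Eᵀ)*(X*Xᵀ)) := by
    rw [trace_mul_comm (E*Eᵀ) (X*Xᵀ), Matrix.mul_assoc Eᵀ X, trace_mul_comm]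
    simp only [Matrix.mul_assoc]
  have trac : trace ((Xᵀ*E)*(Eᵀ*E)) = trace ((E*Eᵀ)*(E*Xᵀ)) := by
    rw [Matrix.mul_assoc Xᵀ E, trace_mul_comm]
    simp only [Matrix.mul_assoc]
  have trca : trace ((Eᵀ*E)*(Xᵀ*E)) = trace ((E*Eᵀ)*(E*Xᵀ)) := by
    rw [trace_mul_comm (Eᵀ*E) (Xᵀ*E)]; exact trac
  have trbc : trace ((Eᵀ*X)*(Eᵀ*E)) = trace ((E*Eᵀ)*(X*Eᵀ)) := by
    rw [trace_mul_comm (E*Eᵀ) (X*Eᵀ), Matrix.mul_assoc Eᵀ X, trace_mul_comm]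
    simp only [Matrix.mul_assoc]
  have trcb : trace ((Eᵀ*E)*(Eᵀ*X)) = trace ((E*Eᵀ)*(X*Eᵀ)) := by
    rw [trace_mul_comm (Eᵀ*E) (Eᵀ*X)]; exact trbc
  have trcc : trace ((Eᵀ*E)*(Eᵀ*E)) = trace ((E*Eᵀ)*(E*Eᵀ)) := by
    rw [Matrix.mul_assoc Eᵀ E, trace_mul_comm]
    simp only [Matrix.mul_assoc]
  have hsym' : trace ((E*Eᵀ)*(E*Xᵀ)) = trace ((E*Eᵀ)*(X*Eᵀ)) := by rw [hsym]
  simp only [Matrix.trace_add, Matrix.trace_sub]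
  rw [tra, trb, trab, trba, trac, trca, trbc, trcb, trcc, hsym'] ; ring


variable {d : ℕ}

def refl (u : Fin d → ℝ) : Matrix (Fin d) (Fin d) ℝ :=
  1 - vecMulVec u u - vecMulVec u u

lemma vecMulVec_mul (u v w z : Fin d → ℝ) :
    vecMulVec u v * vecMulVec w z = (v ⬝ᵥ w) • vecMulVec u z := by
  ext i j
  simp only [Matrix.mul_apply, vecMulVec_apply, Matrix.smul_apply, smul_eq_mul, dotProduct,
    Finset.sum_mul]
  apply Finset.sum_congr rfl; intro l _; ring

lemma refl_transpose (u : Fin d → ℝ) : (refl u)ᵀ = refl u := by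
  have h : (vecMulVec u u)ᵀ = vecMulVec u u := by
    ext i j; simp [vecMulVec_apply]; ring
  simp [refl, transpose_sub, h]

lemma refl_mul_self {u : Fin d → ℝ} (hu : ∑ i, u i ^ 2 = 1) : refl u * refl u = 1 := by
  have hd : u ⬝ᵥ u = 1 := by
    simpa [dotProduct, sq] using hu
  have hN : vecMulVec u u * vecMulVec u u = vecMulVec u u := by
    rw [vecMulVec_mul, hd, one_smul]
  unfold refl
  have expand : (1 - vecMulVec u u - vecMulVec u u) * (1 - vecMulVec u u - vecMulVec u u) =
      1 - (vecMulVec u u + vecMulVec u u + vecMulVec u u + vecMulVec u u)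
        + (vecMulVec u u * vecMulVec u u + vecMulVec u u * vecMulVec u u
          + vecMulVec u u * vecMulVec u u + vecMulVec u u * vecMulVec u u) := by
    noncomm_ring
  rw [expand, hN]
  abel

lemma refl_orth {u : Fin d → ℝ} (hu : ∑ i, u i ^ 2 = 1) : (refl u)ᵀ * refl u = 1 := by
  rw [refl_transpose, refl_mul_self hu]

lemma trace_mul_vecMulVec (B : Matrix (Fin d) (Fin d) ℝ) (u v : Fin d → ℝ) :
    trace (B * vecMulVec v u) = qf B u v := by
  simp only [Matrix.trace, Matrix.diag, Matrix.mul_apply, vecMulVec_apply, qf, Finset.mul_sum]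
  apply Finset.sum_congr rfl; intro i _
  apply Finset.sum_congr rfl; intro j _
  ring

lemma qf_scale (B : Matrix (Fin d) (Fin d) ℝ) (c : ℝ) (v : Fin d → ℝ) :
    qf B (fun i => c * v i) (fun i => c * v i) = c^2 * qf B v v := by
  simp only [qf, Finset.mul_sum]
  apply Finset.sum_congr rfl; intro i _
  apply Finset.sum_congr rfl; intro j _
  ring

lemma qf_onehot (B : Matrix (Fin d) (Fin d) ℝ) (i : Fin d) (v : Fin d → ℝ) :
    qf B (fun l => if l = i then (1:ℝ) else 0) v = ∑ j, B i j * v j := by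
  simp [qf, ite_mul]

lemma double_refl_ineq (B : Matrix (Fin d) (Fin d) ℝ)
    (hmax : ∀ O : Matrix (Fin d) (Fin d) ℝ, Oᵀ * O = 1 → trace (B * Oᵀ) ≤ trace B)
    (u v : Fin d → ℝ) (hu : ∑ i, u i ^ 2 = 1) (hv : ∑ i, v i ^ 2 = 1) :
    4*((v ⬝ᵥ u) * qf B u v) ≤ 2*qf B u u + 2*qf B v v := by
  have hO : (refl u * refl v)ᵀ * (refl u * refl v) = 1 := by
    rw [transpose_mul, refl_transpose, refl_transpose]
    calc (refl v) * (refl u) * ((refl u) * (refl v))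
        = (refl v) * ((refl u) * (refl u)) * (refl v) := by simp only [Matrix.mul_assoc]
      _ = 1 := by rw [refl_mul_self hu, Matrix.mul_one, refl_mul_self hv]
  have h1 := hmax (refl u * refl v) hO
  have hvu : (refl v) * (refl u) = 1 - vecMulVec u u - vecMulVec u u
      - vecMulVec v v - vecMulVec v v
      + ((v ⬝ᵥ u) • vecMulVec v u + (v ⬝ᵥ u) • vecMulVec v u
        + (v ⬝ᵥ u) • vecMulVec v u + (v ⬝ᵥ u) • vecMulVec v u) := by
    have e : (refl v) * (refl u) = 1 - vecMulVec u u - vecMulVec u u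
        - vecMulVec v v - vecMulVec v v
        + (vecMulVec v v * vecMulVec u u + vecMulVec v v * vecMulVec u u
          + vecMulVec v v * vecMulVec u u + vecMulVec v v * vecMulVec u u) := by
      unfold refl; noncomm_ring
    rw [e, vecMulVec_mul]
  have htr : trace (B * (refl u * refl v)ᵀ)
      = trace B - 2*qf B u u - 2*qf B v v + 4*((v ⬝ᵥ u) * qf B u v) := by
    rw [transpose_mul, refl_transpose, refl_transpose, hvu]
    simp only [Matrix.mul_add, Matrix.mul_sub, Matrix.mul_one, Matrix.mul_smul,
      Matrix.trace_add, Matrix.trace_sub, Matrix.trace_smul, trace_mul_vecMulVec, smul_eq_mul]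
    ring
  rw [htr] at h1
  linarith


lemma sym_from_ineq (Bii Bij Bji Bjj : ℝ) (hm0 : 0 ≤ Bii + Bjj)
    (h : ∀ c s : ℝ, c^2 + s^2 = 1 →
      4*c*(c*Bii + s*Bij) ≤ 2*Bii + 2*(c*(c*Bii + s*Bij) + s*(c*Bji + s*Bjj))) :
    Bij = Bji := by
  by_contra hne
  have key : ∀ t : ℝ, (1-t^2)*(2*t)*(Bij - Bji) ≤ (2*t)^2*(Bii + Bjj) := by
    intro t
    have hden : (0:ℝ) < 1 + t^2 := by positivity
    obtain ⟨c, hc⟩ : ∃ c:ℝ, c = (1-t^2)/(1+t^2) := ⟨_, rfl⟩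
    obtain ⟨s, hs⟩ : ∃ s:ℝ, s = (2*t)/(1+t^2) := ⟨_, rfl⟩
    have hcs : c^2 + s^2 = 1 := by rw [hc, hs]; field_simp; ring
    have h1 := h c s hcs
    have e0 : (c^2 + s^2 - 1) * Bii = 0 := by
      have h0 : c^2 + s^2 - 1 = 0 := by rw [hcs]; ring
      rw [h0]; ring
    have h2 : c*s*(Bij - Bji) ≤ s^2*(Bii + Bjj) := by nlinarith [h1, e0]
    have h3 := mul_le_mul_of_nonneg_left h2
      (le_of_lt (by positivity : (0:ℝ) < (1+t^2)^2))
    calc (1-t^2)*(2*t)*(Bij - Bji) = (1+t^2)^2 * (c*s*(Bij - Bji)) := by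
          rw [hc, hs]; field_simp
      _ ≤ (1+t^2)^2 * (s^2*(Bii + Bjj)) := h3
      _ = (2*t)^2*(Bii + Bjj) := by rw [hs]; field_simp
  obtain ⟨a, ha⟩ : ∃ x:ℝ, x = Bij - Bji := ⟨_, rfl⟩
  obtain ⟨m, hmd⟩ : ∃ x:ℝ, x = Bii + Bjj := ⟨_, rfl⟩
  simp only [← ha, ← hmd] at key
  have hm : 0 ≤ m := hmd ▸ hm0
  have ha0 : a ≠ 0 := by rw [ha]; exact sub_ne_zero.mpr hne
  have hdenpos : (0:ℝ) < 2*|a| + 8*m + 1 := by nlinarith [abs_nonneg a]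
  obtain ⟨ε, hεdef⟩ : ∃ x:ℝ, x = 1/(2*|a| + 8*m + 1) := ⟨_, rfl⟩
  have hεpos : 0 < ε := by rw [hεdef]; positivity
  have hprod : ε * (2*|a| + 8*m + 1) = 1 := by
    rw [hεdef]; field_simp
  have hεa : ε * |a| ≤ 1/2 := by
    nlinarith [hprod, hεpos, abs_nonneg a, mul_nonneg hεpos.le hm]
  have hεm : ε * m ≤ 1/8 := by
    nlinarith [hprod, hεpos, mul_nonneg hεpos.le (abs_nonneg a)]
  have ha2 : 0 < a^2 := by positivity
  have h4 : ε^2 * a^2 ≤ 1/4 := by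
    nlinarith [hεa, mul_nonneg hεpos.le (abs_nonneg a), sq_abs a]
  have h5 : 0 < ε * a^2 := mul_pos hεpos ha2
  have hkey := key (a*ε)
  have p1 : ε^2*a^2*(ε*a^2) ≤ 1/4*(ε*a^2) := mul_le_mul_of_nonneg_right h4 h5.le
  have p2 : ε*m*(ε*a^2) ≤ 1/8*(ε*a^2) := mul_le_mul_of_nonneg_right hεm h5.le
  nlinarith [hkey, p1, p2, h5]


lemma psd_of_max (B : Matrix (Fin d) (Fin d) ℝ)
    (hmax : ∀ O : Matrix (Fin d) (Fin d) ℝ, Oᵀ * O = 1 → trace (B * Oᵀ) ≤ trace B) :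
    Bᵀ = B ∧ ∀ v : Fin d → ℝ, 0 ≤ qf B v v := by
  have hunit : ∀ u : Fin d → ℝ, (∑ i, u i ^ 2 = 1) → 0 ≤ qf B u u := by
    intro u hu
    have h1 := hmax (refl u) (refl_orth hu)
    rw [refl_transpose] at h1
    have h2 : B * refl u = B - B * vecMulVec u u - B * vecMulVec u u := by
      simp [refl, Matrix.mul_sub, Matrix.mul_one]
    rw [h2, Matrix.trace_sub, Matrix.trace_sub, trace_mul_vecMulVec] at h1
    linarith
  have hq : ∀ v : Fin d → ℝ, 0 ≤ qf B v v := by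
    intro v
    by_cases hv : v = 0
    · subst hv; simp [qf]
    · have hex : ∃ i, v i ≠ 0 := by
        by_contra hvv; push_neg at hvv; exact hv (funext hvv)
      obtain ⟨i0, hi0⟩ := hex
      have hsum : 0 < ∑ i, v i ^ 2 :=
        Finset.sum_pos' (fun i _ => sq_nonneg _) ⟨i0, Finset.mem_univ i0, by positivity⟩
      have hnpos : 0 < Real.sqrt (∑ i, v i ^ 2) := Real.sqrt_pos.mpr hsum
      have hn2 : (Real.sqrt (∑ i, v i ^ 2))^2 = ∑ i, v i ^ 2 := Real.sq_sqrt hsum.le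
      have huu : ∑ i, ((Real.sqrt (∑ i, v i ^ 2))⁻¹ * v i)^2 = 1 := by
        simp only [mul_pow]
        rw [← Finset.mul_sum, ← hn2]
        field_simp
        rw [Real.sqrt_sq hnpos.le]
      have h3 := hunit (fun i => (Real.sqrt (∑ i, v i ^ 2))⁻¹ * v i) huu
      rw [qf_scale] at h3
      nlinarith [h3, sq_nonneg (Real.sqrt (∑ i, v i ^ 2))⁻¹, hnpos,
        pow_pos (inv_pos.mpr hnpos) 2]
  have hsym : ∀ i j : Fin d, B i j = B j i := by
    intro i j
    by_cases hij : i = j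
    · rw [hij]
    · have hd : ∀ l : Fin d, 0 ≤ B l l := by
        intro l
        have h4 := hq (fun m => if m = l then (1:ℝ) else 0)
        rwa [qf_onehot, show (∑ m, B l m * (if m = l then (1:ℝ) else 0)) = B l l by simp] at h4
      apply sym_from_ineq (B i i) (B i j) (B j i) (B j j) (by
        have := hd i; have := hd j; linarith)
      intro c s hcs
      set u : Fin d → ℝ := fun l => if l = i then 1 else 0 with hu_def
      set v : Fin d → ℝ := fun l => if l = i then c else if l = j then s else 0 with hv_def
      have hu : ∑ l, u l ^ 2 = 1 := by
        have e : ∀ l, u l ^2 = if l = i then (1:ℝ) else 0 := by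
          intro l; by_cases h : l = i <;> simp [hu_def, h]
        rw [Finset.sum_congr rfl fun l _ => e l]
        simp
      have hv : ∑ l, v l ^ 2 = 1 := by
        have e : ∀ l, v l ^2 = v l * v l := fun l => sq (v l) ▸ by ring
        rw [Finset.sum_congr rfl fun l _ => e l, sum_two_support hij c s v, hv_def]
        simp [hij, Ne.symm hij]
        nlinarith [hcs]
      have hdot : v ⬝ᵥ u = c := by
        rw [dotProduct, sum_two_support hij c s u, hu_def]
        simp [Ne.symm hij]
      have hquv : qf B u v = c * B i i + s * B i j := by
        rw [hu_def, qf_onehot,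
          Finset.sum_congr rfl fun m _ => mul_comm (B i m) (v m), sum_two_support hij c s _]
      have hquu : qf B u u = B i i := by
        rw [hu_def, qf_onehot]
        simp
      have hqvv : qf B v v = c*(c*B i i + s*B i j) + s*(c*B j i + s*B j j) := by
        rw [qf, sum_two_support hij c s (fun l => ∑ m, B l m * v m)]
        rw [Finset.sum_congr rfl fun m _ => mul_comm (B i m) (v m), sum_two_support hij c s _]
        rw [Finset.sum_congr rfl fun m _ => mul_comm (B j m) (v m), sum_two_support hij c s _]
      have h5 := double_refl_ineq B hmax u v hu hv
      rw [hdot, hquv, hquu, hqvv] at h5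
      linarith
  exact ⟨by ext i j; exact hsym j i, hq⟩


lemma exists_max (A : Matrix (Fin d) (Fin d) ℝ) :
    ∃ Q₀ : Matrix (Fin d) (Fin d) ℝ, Q₀ᵀ * Q₀ = 1 ∧
      ∀ Q : Matrix (Fin d) (Fin d) ℝ, Qᵀ * Q = 1 → trace (A * Qᵀ) ≤ trace (A * Q₀ᵀ) := by
  set K : Set (Matrix (Fin d) (Fin d) ℝ) := {Q | Qᵀ * Q = 1} with hK
  have hKne : K.Nonempty := ⟨1, by simp [hK]⟩
  have hKclosed : IsClosed K := by
    have : K = (fun Q : Matrix (Fin d) (Fin d) ℝ => Qᵀ * Q) ⁻¹' {1} := by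
      ext Q; simp [hK]
    rw [this]
    exact IsClosed.preimage (Continuous.matrix_mul (Continuous.matrix_transpose continuous_id)
      continuous_id) isClosed_singleton
  have hCcomp : IsCompact {Q : Matrix (Fin d) (Fin d) ℝ | ∀ i j, Q i j ∈ Set.Icc (-1:ℝ) 1} := by
    have h1 : IsCompact (Set.univ.pi fun _ : Fin d => Set.univ.pi
        fun _ : Fin d => Set.Icc (-1:ℝ) 1) :=
      isCompact_univ_pi fun _ => isCompact_univ_pi fun _ => isCompact_Icc
    have h2 : {Q : Matrix (Fin d) (Fin d) ℝ | ∀ i j, Q i j ∈ Set.Icc (-1:ℝ) 1}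
        = (Set.univ.pi fun _ : Fin d => Set.univ.pi fun _ : Fin d => Set.Icc (-1:ℝ) 1) := by
      ext Q
      constructor
      · intro h
        refine Set.mem_pi.mpr ?_
        intro i _
        rw [Set.mem_pi]
        intro j _
        exact h i j
      · intro h i j
        exact Set.mem_pi.mp (Set.mem_pi.mp h i (Set.mem_univ i)) j (Set.mem_univ j)
    rw [h2]; exact h1
  have hsub : K ⊆ {Q : Matrix (Fin d) (Fin d) ℝ | ∀ i j, Q i j ∈ Set.Icc (-1:ℝ) 1} := by
    intro Q hQ i j
    have hdiag : (Qᵀ * Q) j j = 1 := by rw [hQ]; simp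
    have hsum : ∑ l, Q l j * Q l j = 1 := by
      simpa [Matrix.mul_apply, Matrix.transpose_apply] using hdiag
    have hle : Q i j * Q i j ≤ 1 := by
      rw [← hsum]
      exact Finset.single_le_sum (f := fun l => Q l j * Q l j)
        (fun l _ => mul_self_nonneg _) (Finset.mem_univ i)
    constructor <;> nlinarith [hle]
  have hKcomp : IsCompact K := hCcomp.of_isClosed_subset hKclosed hsub
  have hfc : Continuous fun Q : Matrix (Fin d) (Fin d) ℝ => trace (A * Qᵀ) :=
    Continuous.matrix_trace (Continuous.matrix_mul continuous_const
      (Continuous.matrix_transpose continuous_id))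
  obtain ⟨Q₀, hQ₀K, hmax⟩ := hKcomp.exists_isMaxOn hKne hfc.continuousOn
  exact ⟨Q₀, hQ₀K, fun Q hQ => hmax hQ⟩


lemma exists_polar (A : Matrix (Fin d) (Fin d) ℝ) :
    ∃ Q : Matrix (Fin d) (Fin d) ℝ, Qᵀ * Q = 1 ∧ ((A * Qᵀ)ᵀ = A * Qᵀ) ∧
      ∀ v : Fin d → ℝ, 0 ≤ qf (A * Qᵀ) v v := by
  obtain ⟨Q₀, hQ₀, hmax₀⟩ := exists_max A
  have hmax : ∀ O : Matrix (Fin d) (Fin d) ℝ, Oᵀ * O = 1 →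
      trace ((A * Q₀ᵀ) * Oᵀ) ≤ trace (A * Q₀ᵀ) := by
    intro O hO
    have hmem : (O * Q₀)ᵀ * (O * Q₀) = 1 := by
      rw [transpose_mul]
      calc Q₀ᵀ * Oᵀ * (O * Q₀) = Q₀ᵀ * (Oᵀ * (O * Q₀)) := by simp only [Matrix.mul_assoc]
        _ = Q₀ᵀ * ((Oᵀ * O) * Q₀) := by simp only [Matrix.mul_assoc]
        _ = 1 := by rw [hO, Matrix.one_mul, hQ₀]
    have h6 := hmax₀ (O * Q₀) hmem
    calc trace ((A * Q₀ᵀ) * Oᵀ) = trace (A * (O * Q₀)ᵀ) := by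
          rw [transpose_mul]; simp only [Matrix.mul_assoc]
      _ ≤ trace (A * Q₀ᵀ) := h6
  obtain ⟨hsym, hq⟩ := psd_of_max (A * Q₀ᵀ) hmax
  exact ⟨Q₀, hQ₀, hsym, hq⟩

lemma vecMul_eq_zero {d k : ℕ} (X : Matrix (Fin d) (Fin k) ℝ) (hX : X.rank = d)
    (u : Fin d → ℝ) (hu : vecMul u X = 0) : u = 0 := by
  have h1 : Xᵀ.mulVecLin u = 0 := by
    simp only [Matrix.mulVecLin_apply, Matrix.mulVec_transpose, hu]
  have hker : u ∈ LinearMap.ker Xᵀ.mulVecLin := h1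
  have hrk : Xᵀ.rank = d := by rw [Matrix.rank_transpose, hX]
  have hfr := LinearMap.finrank_range_add_finrank_ker Xᵀ.mulVecLin
  rw [show Module.finrank ℝ (Fin d → ℝ) = d by simp] at hfr
  have : Module.finrank ℝ (LinearMap.range Xᵀ.mulVecLin) = d := hrk
  have hk0 : Module.finrank ℝ (LinearMap.ker Xᵀ.mulVecLin) = 0 := by omega
  have : LinearMap.ker Xᵀ.mulVecLin = ⊥ := Submodule.finrank_eq_zero.mp hk0
  rw [this] at hker
  simpa using hker

lemma sigma_lemmas {d k : ℕ} (X : Matrix (Fin d) (Fin k) ℝ) (hd : 0 < d) (hX : X.rank = d) :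
    0 < sigmaMin X ∧
      ∀ v : Fin d → ℝ, (sigmaMin X)^2 * (∑ i, v i ^ 2) ≤ ∑ c, (vecMul v X c)^2 := by
  set g : (Fin d → ℝ) → ℝ := fun u => ∑ c, (vecMul u X c)^2 with hg
  set G : Set (Fin d → ℝ) := {u | ∑ i, u i ^ 2 = 1} with hG
  -- compactness of the sphere
  have hGclosed : IsClosed G := by
    have : G = (fun u : Fin d → ℝ => ∑ i, u i ^ 2) ⁻¹' {1} := by ext u; simp [hG]
    rw [this]
    exact IsClosed.preimage (by
      apply continuous_finset_sum
      exact fun i _ => (continuous_apply i).pow 2) isClosed_singleton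
  have hGcomp : IsCompact G := by
    have h1 : IsCompact (Set.univ.pi fun _ : Fin d => Set.Icc (-1:ℝ) 1) :=
      isCompact_univ_pi fun _ => isCompact_Icc
    apply h1.of_isClosed_subset hGclosed
    intro u hu i _
    have hsum : ∑ l, u l ^ 2 = 1 := hu
    have hle : u i ^ 2 ≤ 1 := by
      rw [← hsum]
      exact Finset.single_le_sum (f := fun l => u l ^ 2) (fun l _ => sq_nonneg _)
        (Finset.mem_univ i)
    constructor <;> nlinarith [hle]
  have hGne : G.Nonempty := by
    refine ⟨fun l => if l = ⟨0, hd⟩ then 1 else 0, ?_⟩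
    have e : ∀ l : Fin d, ((if l = (⟨0, hd⟩ : Fin d) then (1:ℝ) else 0))^2
        = if l = ⟨0, hd⟩ then 1 else 0 := by
      intro l; split_ifs <;> norm_num
    show ∑ l, _ = 1
    rw [Finset.sum_congr rfl fun l _ => e l]
    simp
  have hgc : Continuous g := by
    apply continuous_finset_sum
    intro c _
    apply Continuous.pow
    have : (fun u : Fin d → ℝ => vecMul u X c) = fun u => ∑ i, u i * X i c := by
      ext u; simp [Matrix.vecMul, dotProduct]
    rw [this]
    exact continuous_finset_sum _ fun i _ => (continuous_apply i).mul continuous_const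
  obtain ⟨u₀, hu₀G, hmin⟩ := hGcomp.exists_isMinOn hGne hgc.continuousOn
  -- g u₀ > 0
  have hgu₀ : 0 < g u₀ := by
    rcases lt_or_eq_of_le (Finset.sum_nonneg fun c _ => sq_nonneg (vecMul u₀ X c) :
        0 ≤ g u₀) with h | h
    · exact h
    · exfalso
      have hz : vecMul u₀ X = 0 := by
        funext c
        have : ∀ c' ∈ Finset.univ, (vecMul u₀ X c')^2 = 0 := by
          intro c' _
          have := (Finset.sum_eq_zero_iff_of_nonneg
            (fun c' _ => sq_nonneg (vecMul u₀ X c'))).mp h.symm c' (Finset.mem_univ c')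
          exact this
        have := this c (Finset.mem_univ c)
        exact pow_eq_zero_iff (by norm_num) |>.mp this
      have hu0 : u₀ = 0 := vecMul_eq_zero X hX u₀ hz
      have : (0:ℝ) = 1 := by
        have := hu₀G
        rw [hu0] at this
        simpa [hG] using this.symm
      norm_num at this
  set m := Real.sqrt (g u₀) with hm
  have hmpos : 0 < m := Real.sqrt_pos.mpr hgu₀
  -- set S of sigmaMin
  set S : Set ℝ := {r | ∃ u : Fin d → ℝ, euclNorm u = 1 ∧ r = euclNorm (vecMul u X)} with hS
  have hSbdd : BddBelow S := by
    refine ⟨0, ?_⟩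
    rintro r ⟨u, hu, rfl⟩
    exact Real.sqrt_nonneg _
  have hSne : S.Nonempty := by
    obtain ⟨u, hu⟩ := hGne
    exact ⟨euclNorm (vecMul u X), u, by rw [euclNorm, hu]; simp, rfl⟩
  have hunit_sum : ∀ u : Fin d → ℝ, euclNorm u = 1 → ∑ i, u i ^ 2 = 1 := by
    intro u hu
    have h0 : 0 ≤ ∑ i, u i ^ 2 := Finset.sum_nonneg fun i _ => sq_nonneg _
    have := Real.sq_sqrt h0
    rw [euclNorm] at hu
    rw [hu] at this
    linarith [this]
  have hlow : ∀ r ∈ S, m ≤ r := by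
    rintro r ⟨u, hu, rfl⟩
    have huG : u ∈ G := hunit_sum u hu
    have := hmin huG
    rw [euclNorm]
    exact Real.sqrt_le_sqrt this
  have hσm : m ≤ sigmaMin X := le_csInf hSne hlow
  have hσpos : 0 < sigmaMin X := lt_of_lt_of_le hmpos hσm
  have hσnn : 0 ≤ sigmaMin X := hσpos.le
  refine ⟨hσpos, ?_⟩
  intro v
  by_cases hv : v = 0
  · subst hv
    simp [Matrix.vecMul, dotProduct]
  · have hex : ∃ i, v i ≠ 0 := by
      by_contra hvv; push_neg at hvv; exact hv (funext hvv)
    obtain ⟨i0, hi0⟩ := hex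
    have hsum : 0 < ∑ i, v i ^ 2 :=
      Finset.sum_pos' (fun i _ => sq_nonneg _) ⟨i0, Finset.mem_univ i0, by positivity⟩
    set n := Real.sqrt (∑ i, v i ^ 2) with hn
    have hnpos : 0 < n := Real.sqrt_pos.mpr hsum
    have hn2 : n^2 = ∑ i, v i ^ 2 := Real.sq_sqrt hsum.le
    have huu : euclNorm (fun i => n⁻¹ * v i) = 1 := by
      rw [euclNorm]
      simp only [mul_pow]
      rw [← Finset.mul_sum, ← hn2]
      rw [show (n⁻¹)^2 * n^2 = 1 by field_simp]
      exact Real.sqrt_one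
    have hmem : euclNorm (vecMul (fun i => n⁻¹ * v i) X) ∈ S :=
      ⟨fun i => n⁻¹ * v i, huu, rfl⟩
    have hσle : sigmaMin X ≤ euclNorm (vecMul (fun i => n⁻¹ * v i) X) := csInf_le hSbdd hmem
    have hvm : vecMul (fun i => n⁻¹ * v i) X = fun c => n⁻¹ * vecMul v X c := by
      funext c
      simp only [Matrix.vecMul, dotProduct, Finset.mul_sum]
      apply Finset.sum_congr rfl; intro i _; ring
    rw [hvm] at hσle
    have heq : euclNorm (fun c => n⁻¹ * vecMul v X c) = n⁻¹ * Real.sqrt (∑ c, (vecMul v X c)^2) := by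
      rw [euclNorm]
      simp only [mul_pow]
      rw [← Finset.mul_sum, Real.sqrt_mul (sq_nonneg _), Real.sqrt_sq (inv_pos.mpr hnpos).le]
    rw [heq] at hσle
    have h2 : sigmaMin X * n ≤ Real.sqrt (∑ c, (vecMul v X c)^2) := by
      rw [mul_comm]
      calc n * sigmaMin X ≤ n * (n⁻¹ * Real.sqrt (∑ c, (vecMul v X c)^2)) :=
            mul_le_mul_of_nonneg_left hσle hnpos.le
        _ = Real.sqrt (∑ c, (vecMul v X c)^2) := by field_simp
    have h3 : (sigmaMin X * n)^2 ≤ (∑ c, (vecMul v X c)^2) := by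
      have hnn : 0 ≤ sigmaMin X * n := mul_nonneg hσnn hnpos.le
      have := mul_le_mul h2 h2 hnn (Real.sqrt_nonneg _)
      rwa [Real.mul_self_sqrt (Finset.sum_nonneg fun c _ => sq_nonneg _), ← pow_two] at this
    calc (sigmaMin X)^2 * (∑ i, v i ^ 2) = (sigmaMin X * n)^2 := by rw [mul_pow, hn2]
      _ ≤ _ := h3


lemma qf_gram {d k : ℕ} (X : Matrix (Fin d) (Fin k) ℝ) (w : Fin d → ℝ) :
    qf (X * Xᵀ) w w = ∑ c, (Matrix.vecMul w X c)^2 := by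
  simp only [qf, Matrix.mul_apply, Matrix.transpose_apply, Matrix.vecMul, dotProduct, sq,
    Finset.sum_mul, Finset.mul_sum]
  rw [Finset.sum_congr rfl fun y _ => Finset.sum_comm]
  rw [Finset.sum_comm]
  apply Finset.sum_congr rfl; intro c _
  apply Finset.sum_congr rfl; intro y _
  apply Finset.sum_congr rfl; intro x _
  ring

lemma trace_EEt {d k : ℕ} (E : Matrix (Fin d) (Fin k) ℝ) :
    trace (E * Eᵀ) = ∑ i, ∑ j, (E i j)^2 := by
  simp [Matrix.trace, Matrix.diag, Matrix.mul_apply, sq]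

lemma trace_sandwich_nonneg {d k : ℕ} (E : Matrix (Fin d) (Fin k) ℝ)
    (B : Matrix (Fin d) (Fin d) ℝ) (hB : ∀ v : Fin d → ℝ, 0 ≤ qf B v v) :
    0 ≤ trace ((E * Eᵀ) * B) := by
  rw [← Matrix.trace_mul_cycle Eᵀ B E, trace_conj]
  exact Finset.sum_nonneg fun j _ => hB _

lemma trace_sandwich_ge {d k : ℕ} (E X : Matrix (Fin d) (Fin k) ℝ) (σ : ℝ)
    (hq : ∀ v : Fin d → ℝ, σ^2 * (∑ i, v i ^ 2) ≤ ∑ c, (Matrix.vecMul v X c)^2) :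
    σ^2 * trace (E * Eᵀ) ≤ trace ((E * Eᵀ) * (X * Xᵀ)) := by
  rw [← Matrix.trace_mul_cycle Eᵀ (X * Xᵀ) E, trace_conj, trace_EEt]
  calc σ^2 * (∑ i, ∑ j, (E i j)^2) = ∑ j, σ^2 * ∑ i, (E i j)^2 := by
        rw [Finset.sum_comm, Finset.mul_sum]
    _ ≤ ∑ j, ∑ c, (Matrix.vecMul (fun i => E i j) X c)^2 :=
        Finset.sum_le_sum fun j _ => hq _
    _ = ∑ j, qf (X * Xᵀ) (fun i => E i j) (fun i => E i j) :=
        Finset.sum_congr rfl fun j _ => (qf_gram X _).symm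

end Procrustes

theorem stmt0 {d k : ℕ} (hdk : d ≤ k)
    (X Xt : Matrix (Fin d) (Fin k) ℝ)
    (hX : X.rank = d) (hXt : Xt.rank = d) :
    rho X Xt ≤ (1 / Real.sqrt (2 * (Real.sqrt 2 - 1))) * (1 / sigmaMin X) *
      frobNorm (Xᵀ * X - Xtᵀ * Xt) := by
  classical
  rcases Nat.eq_zero_or_pos d with hd0 | hd
  · subst hd0
    have h0 : rho X Xt = 0 := by
      have hset : {r | ∃ Q : Matrix (Fin 0) (Fin 0) ℝ, Qᵀ * Q = 1 ∧ r = frobNorm (X - Q * Xt)}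
          = {(0:ℝ)} := by
        ext r
        simp only [Set.mem_setOf_eq, Set.mem_singleton_iff]
        constructor
        · rintro ⟨Q, hQ, rfl⟩
          simp [frobNorm]
        · rintro rfl
          exact ⟨1, by simp, by simp [frobNorm]⟩
      rw [rho, hset, csInf_singleton]
    have hσ : sigmaMin X = 0 := by
      have hset : {r | ∃ u : Fin 0 → ℝ, euclNorm u = 1 ∧ r = euclNorm (Matrix.vecMul u X)}
          = (∅ : Set ℝ) := by
        ext r
        simp [euclNorm]
      rw [sigmaMin, hset, Real.sInf_empty]
    rw [h0, hσ]
    rw [div_zero]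
    have : (0:ℝ) ≤ frobNorm (Xᵀ * X - Xtᵀ * Xt) := Real.sqrt_nonneg _
    nlinarith [this]
  · obtain ⟨hσpos, hσquad⟩ := Procrustes.sigma_lemmas X hd hX
    obtain ⟨Q, hQ, hBsym, hBpsd⟩ := Procrustes.exists_polar (X * Xtᵀ)
    have hrho : rho X Xt ≤ frobNorm (X - Q * Xt) := by
      apply csInf_le
      · refine ⟨0, ?_⟩
        rintro r ⟨Q', hQ', rfl⟩
        exact Real.sqrt_nonneg _
      · exact ⟨Q, hQ, rfl⟩
    set σ := sigmaMin X with hσdef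
    set E := X - Q * Xt with hE
    -- symmetry facts
    have hXY : X * (Q * Xt)ᵀ = (X * Xtᵀ) * Qᵀ := by
      rw [transpose_mul, ← Matrix.mul_assoc]
    have hYX : (Q * Xt) * Xᵀ = X * (Q * Xt)ᵀ := by
      calc (Q * Xt) * Xᵀ = (X * (Q * Xt)ᵀ)ᵀ := by rw [transpose_mul, transpose_transpose]
        _ = ((X * Xtᵀ) * Qᵀ)ᵀ := by rw [hXY]
        _ = (X * Xtᵀ) * Qᵀ := hBsym
        _ = X * (Q * Xt)ᵀ := hXY.symm
    have hsymEX : E * Xᵀ = X * Eᵀ := by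
      rw [hE]
      calc (X - Q * Xt) * Xᵀ = X * Xᵀ - (Q * Xt) * Xᵀ := Matrix.sub_mul _ _ _
        _ = X * Xᵀ - X * (Q * Xt)ᵀ := by rw [hYX]
        _ = X * (X - Q * Xt)ᵀ := by rw [transpose_sub, Matrix.mul_sub]
    have hSsym : (X * Eᵀ)ᵀ = X * Eᵀ := by
      rw [transpose_mul, transpose_transpose, hsymEX]
    have hHsym : (E * Eᵀ)ᵀ = E * Eᵀ := by
      rw [transpose_mul, transpose_transpose]
    -- Gram equality
    have hYtY : (Q * Xt)ᵀ * (Q * Xt) = Xtᵀ * Xt := by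
      rw [transpose_mul]
      calc Xtᵀ * Qᵀ * (Q * Xt) = Xtᵀ * (Qᵀ * (Q * Xt)) := by simp only [Matrix.mul_assoc]
        _ = Xtᵀ * ((Qᵀ * Q) * Xt) := by simp only [Matrix.mul_assoc]
        _ = Xtᵀ * Xt := by rw [hQ, Matrix.one_mul]
    have hD : Xᵀ * X - Xtᵀ * Xt = Xᵀ * E + Eᵀ * X - Eᵀ * E := by
      rw [← hYtY, hE, transpose_sub]
      simp only [Matrix.sub_mul, Matrix.mul_sub]
      abel
    have hident := Procrustes.trace_identity E X hsymEX
    have hhm : σ^2 * trace (E * Eᵀ) ≤ trace ((E * Eᵀ) * (X * Xᵀ)) :=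
      Procrustes.trace_sandwich_ge E X σ hσquad
    have hp : 0 ≤ trace ((E * Eᵀ) * ((X * Xtᵀ) * Qᵀ)) :=
      Procrustes.trace_sandwich_nonneg E _ hBpsd
    have hMS : X * Xᵀ - X * Eᵀ = (X * Xtᵀ) * Qᵀ := by
      rw [hE, transpose_sub, Matrix.mul_sub, hXY]
      abel
    have hsle : trace ((E * Eᵀ) * (X * Eᵀ)) ≤ trace ((E * Eᵀ) * (X * Xᵀ)) := by
      have hdiff : trace ((E * Eᵀ) * (X * Xᵀ)) - trace ((E * Eᵀ) * (X * Eᵀ))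
          = trace ((E * Eᵀ) * ((X * Xtᵀ) * Qᵀ)) := by
        rw [← Matrix.trace_sub, ← Matrix.mul_sub, hMS]
      linarith [hp, hdiff]
    have hgnn : (0:ℝ) ≤ ∑ i, ∑ j, ((E * Eᵀ) i j)^2 :=
      Finset.sum_nonneg fun i _ => Finset.sum_nonneg fun j _ => sq_nonneg _
    have hsnn : (0:ℝ) ≤ ∑ i, ∑ j, ((X * Eᵀ) i j)^2 :=
      Finset.sum_nonneg fun i _ => Finset.sum_nonneg fun j _ => sq_nonneg _
    have hCS : trace ((E * Eᵀ) * (X * Eᵀ))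
        ≤ Real.sqrt (∑ i, ∑ j, ((E * Eᵀ) i j)^2) * Real.sqrt (∑ i, ∑ j, ((X * Eᵀ) i j)^2) :=
      Procrustes.trace_CS _ _ hSsym
    have hgn2 : (Real.sqrt (∑ i, ∑ j, ((E * Eᵀ) i j)^2))^2 = trace ((E * Eᵀ) * (E * Eᵀ)) := by
      rw [Real.sq_sqrt hgnn, Procrustes.trace_mul_eq_sum]
      apply Finset.sum_congr rfl; intro i _
      apply Finset.sum_congr rfl; intro j _
      rw [show (E * Eᵀ) j i = (E * Eᵀ)ᵀ i j from rfl, hHsym]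
      ring
    have hsn2 : (Real.sqrt (∑ i, ∑ j, ((X * Eᵀ) i j)^2))^2 = trace ((X * Eᵀ) * (X * Eᵀ)) := by
      rw [Real.sq_sqrt hsnn, Procrustes.trace_mul_eq_sum]
      apply Finset.sum_congr rfl; intro i _
      apply Finset.sum_congr rfl; intro j _
      rw [show (X * Eᵀ) j i = (X * Eᵀ)ᵀ i j from rfl, hSsym]
      ring
    have hr2 : (Real.sqrt 2)^2 = 2 := Real.sq_sqrt (by norm_num)
    have hr1 : 1 ≤ Real.sqrt 2 := by nlinarith [Real.sqrt_nonneg 2, hr2]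
    have hrle : Real.sqrt 2 ≤ 2 := by nlinarith [Real.sqrt_nonneg 2, hr2]
    have h1lt : 1 < Real.sqrt 2 := by nlinarith [hr2, hr1]
    have hkey := Procrustes.scalar_key (Real.sqrt 2)
      (Real.sqrt (∑ i, ∑ j, ((E * Eᵀ) i j)^2)) (Real.sqrt (∑ i, ∑ j, ((X * Eᵀ) i j)^2))
      (trace ((E * Eᵀ) * (X * Xᵀ))) (trace ((E * Eᵀ) * (X * Eᵀ))) hr2 hr1 hrle hsle hCS
    have hchain : (2*Real.sqrt 2 - 2) * (σ^2 * trace (E * Eᵀ))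
        ≤ trace ((Xᵀ * X - Xtᵀ * Xt) * (Xᵀ * X - Xtᵀ * Xt)) := by
      rw [hD, hident]
      calc (2*Real.sqrt 2 - 2) * (σ^2 * trace (E * Eᵀ))
          ≤ (2*Real.sqrt 2 - 2) * trace ((E * Eᵀ) * (X * Xᵀ)) :=
            mul_le_mul_of_nonneg_left hhm (by linarith)
        _ ≤ 2*(Real.sqrt (∑ i, ∑ j, ((X * Eᵀ) i j)^2))^2
              + 2*trace ((E * Eᵀ) * (X * Xᵀ)) - 4*trace ((E * Eᵀ) * (X * Eᵀ))
              + (Real.sqrt (∑ i, ∑ j, ((E * Eᵀ) i j)^2))^2 := hkey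
        _ = 2*trace ((E * Eᵀ) * (X * Xᵀ)) + 2*trace ((X * Eᵀ) * (X * Eᵀ))
              - 4*trace ((E * Eᵀ) * (X * Eᵀ)) + trace ((E * Eᵀ) * (E * Eᵀ)) := by
            rw [hgn2, hsn2]; ring
    -- Frobenius conversions
    have hDsym : (Xᵀ * X - Xtᵀ * Xt)ᵀ = Xᵀ * X - Xtᵀ * Xt := by
      rw [transpose_sub, transpose_mul, transpose_mul, transpose_transpose, transpose_transpose]
    have hFD : trace ((Xᵀ * X - Xtᵀ * Xt) * (Xᵀ * X - Xtᵀ * Xt))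
        = ∑ i, ∑ j, ((Xᵀ * X - Xtᵀ * Xt) i j)^2 := by
      rw [Procrustes.trace_mul_eq_sum]
      apply Finset.sum_congr rfl; intro i _
      apply Finset.sum_congr rfl; intro j _
      rw [show (Xᵀ * X - Xtᵀ * Xt) j i = (Xᵀ * X - Xtᵀ * Xt)ᵀ i j from rfl, hDsym]
      ring
    obtain ⟨F, hFdef⟩ : ∃ x : ℝ, x = ∑ i, ∑ j, ((Xᵀ * X - Xtᵀ * Xt) i j)^2 := ⟨_, rfl⟩
    obtain ⟨T, hTdef⟩ : ∃ x : ℝ, x = trace (E * Eᵀ) := ⟨_, rfl⟩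
    have hFDnn : (0:ℝ) ≤ F := by
      rw [hFdef]
      exact Finset.sum_nonneg fun i _ => Finset.sum_nonneg fun j _ => sq_nonneg _
    have hcpos : (0:ℝ) < 2*Real.sqrt 2 - 2 := by linarith
    have hchain2 : (2*Real.sqrt 2 - 2) * (σ^2 * T) ≤ F := by
      rw [hFdef, hTdef, ← hFD]
      exact hchain
    have hdiv : T ≤ F / ((2*Real.sqrt 2 - 2) * σ^2) := by
      rw [le_div_iff₀ (mul_pos hcpos (pow_pos hσpos 2))]
      calc T * ((2*Real.sqrt 2 - 2) * σ^2) = (2*Real.sqrt 2 - 2) * (σ^2 * T) := by ring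
        _ ≤ F := hchain2
    have hfrobE : frobNorm E = Real.sqrt T := by
      simp only [frobNorm]
      rw [hTdef, Procrustes.trace_EEt]

    have hsplit : Real.sqrt (F / ((2*Real.sqrt 2 - 2) * σ^2))
        = (1 / Real.sqrt (2*Real.sqrt 2 - 2)) * (1/σ) * Real.sqrt F := by
      rw [Real.sqrt_div hFDnn, Real.sqrt_mul hcpos.le, Real.sqrt_sq hσpos.le]
      have h1 : Real.sqrt (2*Real.sqrt 2 - 2) ≠ 0 := by positivity
      have h2 : σ ≠ 0 := ne_of_gt hσpos
      field_simp
    calc rho X Xt ≤ frobNorm E := hrho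
      _ = Real.sqrt T := hfrobE
      _ ≤ Real.sqrt (F / ((2*Real.sqrt 2 - 2) * σ^2)) := Real.sqrt_le_sqrt hdiv
      _ = (1 / Real.sqrt (2*Real.sqrt 2 - 2)) * (1/σ) * Real.sqrt F := hsplit
      _ = (1 / Real.sqrt (2 * (Real.sqrt 2 - 1))) * (1 / sigmaMin X)
            * frobNorm (Xᵀ * X - Xtᵀ * Xt) := by
          simp only [frobNorm]
          rw [show (2 : ℝ) * (Real.sqrt 2 - 1) = 2*Real.sqrt 2 - 2 by ring, ← hσdef, ← hFdef]
end

section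
/- Let X ∈ ℝ^{d×k} (d ≤ k) have full rank d. For every Ẋ ∈ ℝ^{d×k} satisfying Ẋ Xᵀ = X Ẋᵀ, one has ‖Xᵀ Ẋ + Ẋᵀ X‖_F ≥ √2 · σ_d(X) · ‖Ẋ‖_F. -/
/-!
Put `A = Xᵀ Ẋ`. Expanding the square, `‖A + Aᵀ‖_F² = 2‖A‖_F² + 2 tr(A²)`, and by cyclicity
`tr(A²) = tr((Ẋ Xᵀ)²)`, which is `‖Ẋ Xᵀ‖_F² ≥ 0` because `Ẋ Xᵀ` is symmetric on the horizontal
space. Finally the `j`-th column of `A` is `Xᵀ` applied to the `j`-th column of `Ẋ`, so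
`‖A‖_F ≥ σ_d(X) ‖Ẋ‖_F` column by column.
-/

open Matrix

lemma euclNorm_nonneg {n : ℕ} (v : Fin n → ℝ) : 0 ≤ euclNorm v := Real.sqrt_nonneg _

lemma euclNorm_sq {n : ℕ} (v : Fin n → ℝ) : euclNorm v ^ 2 = ∑ i, v i ^ 2 :=
  Real.sq_sqrt (Finset.sum_nonneg fun _ _ => sq_nonneg _)

lemma euclNorm_smul {n : ℕ} (a : ℝ) (v : Fin n → ℝ) :
    euclNorm (a • v) = |a| * euclNorm v := by
  unfold euclNorm
  rw [← Real.sqrt_sq_eq_abs, ← Real.sqrt_mul (sq_nonneg a), Finset.mul_sum]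
  simp only [Pi.smul_apply, smul_eq_mul, mul_pow]

lemma sigmaMin_nonneg {d k : ℕ} (X : Matrix (Fin d) (Fin k) ℝ) : 0 ≤ sigmaMin X :=
  Real.sInf_nonneg fun _ ⟨_, _, hr⟩ => hr ▸ euclNorm_nonneg _

lemma sigmaMin_mul_euclNorm_le {d k : ℕ} (X : Matrix (Fin d) (Fin k) ℝ) (v : Fin d → ℝ) :
    sigmaMin X * euclNorm v ≤ euclNorm (vecMul v X) := by
  rcases (euclNorm_nonneg v).eq_or_lt with h0 | hv
  · rw [← h0, mul_zero]; exact euclNorm_nonneg _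
  have hunit : euclNorm ((euclNorm v)⁻¹ • v) = 1 := by
    rw [euclNorm_smul, abs_of_pos (inv_pos.2 hv), inv_mul_cancel₀ hv.ne']
  have hbdd : BddBelow {r | ∃ u : Fin d → ℝ, euclNorm u = 1 ∧ r = euclNorm (vecMul u X)} :=
    ⟨0, fun _ ⟨_, _, hr⟩ => hr ▸ euclNorm_nonneg _⟩
  have hle : sigmaMin X ≤ euclNorm (vecMul ((euclNorm v)⁻¹ • v) X) :=
    csInf_le hbdd ⟨_, hunit, rfl⟩
  rw [smul_vecMul, euclNorm_smul, abs_of_pos (inv_pos.2 hv), inv_mul_eq_div,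
    le_div_iff₀ hv] at hle
  exact hle

lemma frobNorm_nonneg {m n : ℕ} (A : Matrix (Fin m) (Fin n) ℝ) : 0 ≤ frobNorm A :=
  Real.sqrt_nonneg _

lemma frobNorm_sq {m n : ℕ} (A : Matrix (Fin m) (Fin n) ℝ) :
    frobNorm A ^ 2 = ∑ i, ∑ j, A i j ^ 2 :=
  Real.sq_sqrt (Finset.sum_nonneg fun _ _ => Finset.sum_nonneg fun _ _ => sq_nonneg _)

lemma frobNorm_sq_eq_sum_euclNorm_col_sq {m n : ℕ} (A : Matrix (Fin m) (Fin n) ℝ) :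
    frobNorm A ^ 2 = ∑ j, euclNorm (fun i => A i j) ^ 2 := by
  simp only [frobNorm_sq, euclNorm_sq]
  exact Finset.sum_comm

lemma frobNorm_sq_eq_trace {m n : ℕ} (A : Matrix (Fin m) (Fin n) ℝ) :
    frobNorm A ^ 2 = trace (Aᵀ * A) := by
  rw [frobNorm_sq, Finset.sum_comm]
  simp only [trace, diag, mul_apply, transpose_apply, sq]

lemma sigmaMin_mul_frobNorm_le {d k n : ℕ} (X : Matrix (Fin d) (Fin k) ℝ)
    (V : Matrix (Fin d) (Fin n) ℝ) : sigmaMin X * frobNorm V ≤ frobNorm (Xᵀ * V) := by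
  have hcol : ∀ j, (fun i => (Xᵀ * V) i j) = vecMul (fun p => V p j) X := fun j => by
    ext i; simp only [mul_apply, transpose_apply, vecMul, dotProduct, mul_comm]
  refine le_of_pow_le_pow_left₀ two_ne_zero (frobNorm_nonneg _) ?_
  rw [mul_pow, frobNorm_sq_eq_sum_euclNorm_col_sq, frobNorm_sq_eq_sum_euclNorm_col_sq,
    Finset.mul_sum]
  refine Finset.sum_le_sum fun j _ => ?_
  rw [← mul_pow, hcol]
  exact pow_le_pow_left₀ (mul_nonneg (sigmaMin_nonneg X) (euclNorm_nonneg _))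
    (sigmaMin_mul_euclNorm_le X _) 2

lemma frobNorm_add_transpose_sq {n : ℕ} (A : Matrix (Fin n) (Fin n) ℝ) :
    frobNorm (A + Aᵀ) ^ 2 = 2 * frobNorm A ^ 2 + 2 * trace (A * A) := by
  have htt : trace (Aᵀ * Aᵀ) = trace (A * A) := by
    rw [← transpose_mul, trace_transpose]
  rw [frobNorm_sq_eq_trace, frobNorm_sq_eq_trace, transpose_add, transpose_transpose,
    add_mul, mul_add, mul_add, trace_add, trace_add, trace_add, htt,
    trace_mul_comm A Aᵀ]
  ring

lemma trace_mul_self_nonneg_of_isSymm {n : ℕ} {B : Matrix (Fin n) (Fin n) ℝ}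
    (hB : B.IsSymm) : 0 ≤ trace (B * B) := by
  nth_rw 1 [← hB.eq]
  rw [← frobNorm_sq_eq_trace]
  positivity

lemma trace_transpose_mul_sq_nonneg {d k : ℕ} (X V : Matrix (Fin d) (Fin k) ℝ)
    (hV : (V * Xᵀ).IsSymm) : 0 ≤ trace (Xᵀ * V * (Xᵀ * V)) := by
  rw [Matrix.mul_assoc, trace_mul_comm, Matrix.mul_assoc, Matrix.mul_assoc,
    ← Matrix.mul_assoc V]
  exact trace_mul_self_nonneg_of_isSymm hV

theorem stmt1_general {d k : ℕ}
    (X : Matrix (Fin d) (Fin k) ℝ)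
    (V : Matrix (Fin d) (Fin k) ℝ) (hV : V * Xᵀ = X * Vᵀ) :
    frobNorm (Xᵀ * V + Vᵀ * X) ≥ Real.sqrt 2 * sigmaMin X * frobNorm V := by
  have hsymm : (V * Xᵀ).IsSymm := by
    rw [IsSymm, transpose_mul, transpose_transpose, hV]
  have hsum : Xᵀ * V + Vᵀ * X = Xᵀ * V + (Xᵀ * V)ᵀ := by
    rw [transpose_mul, transpose_transpose]
  have hlower := sigmaMin_mul_frobNorm_le X V
  have htrace := trace_transpose_mul_sq_nonneg X V hsymm
  have hσV : 0 ≤ sigmaMin X * frobNorm V := mul_nonneg (sigmaMin_nonneg X) (frobNorm_nonneg V)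
  refine le_of_pow_le_pow_left₀ two_ne_zero (frobNorm_nonneg _) ?_
  rw [hsum, frobNorm_add_transpose_sq, mul_assoc, mul_pow, Real.sq_sqrt zero_le_two]
  linarith [pow_le_pow_left₀ hσV hlower 2]

theorem stmt1 {d k : ℕ} (hdk : d ≤ k)
    (X : Matrix (Fin d) (Fin k) ℝ) (hX : X.rank = d)
    (V : Matrix (Fin d) (Fin k) ℝ) (hV : V * Xᵀ = X * Vᵀ) :
    frobNorm (Xᵀ * V + Vᵀ * X) ≥ Real.sqrt 2 * sigmaMin X * frobNorm V :=
  stmt1_general X V hV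
end

section
/- Let X ∈ ℝ^{d×k} (d ≤ k) have full rank d. The subspace V_X = {Ω X : Ω ∈ ℝ^{d×d}, Ω + Ωᵀ = 0} is contained in the kernel of the linear map L_X : ℝ^{d×k} → Sym_k defined by L_X(Ẋ) = Xᵀ Ẋ + Ẋᵀ X, and L_X is injective on the orthogonal complement H_X = {Ẋ ∈ ℝ^{d×k} : Ẋ Xᵀ = X Ẋᵀ}; consequently the kernel of L_X is exactly V_X. -/
open Matrix

/-- A positive semidefinite real matrix with zero trace is zero. -/
lemma psd_trace_zero {n : ℕ} {M : Matrix (Fin n) (Fin n) ℝ}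
    (h : M.PosSemidef) (ht : M.trace = 0) : M = 0 := by
  obtain ⟨B, rfl⟩ : ∃ B : Matrix (Fin n) (Fin n) ℝ, M = Bᴴ * B := by
    open scoped MatrixOrder in exact CStarAlgebra.nonneg_iff_eq_star_mul_self.mp h.nonneg
  have hB : B = 0 := by
    have htr : ∑ j, ∑ i, (B i j) ^ 2 = 0 := by
      simpa [Matrix.trace, Matrix.diag, Matrix.mul_apply, Matrix.conjTranspose_apply, sq]
        using ht
    ext i j
    have h1 : ∀ j ∈ Finset.univ, (0:ℝ) ≤ ∑ i, (B i j) ^ 2 :=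
      fun j _ => Finset.sum_nonneg fun i _ => sq_nonneg _
    have h2 := (Finset.sum_eq_zero_iff_of_nonneg h1).mp htr j (Finset.mem_univ j)
    have h3 : ∀ i ∈ Finset.univ, (0:ℝ) ≤ (B i j) ^ 2 := fun i _ => sq_nonneg _
    have := (Finset.sum_eq_zero_iff_of_nonneg h3).mp h2 i (Finset.mem_univ i)
    exact pow_eq_zero_iff (by norm_num) |>.mp this
  simp [hB]

/-- mulVec vanishing everywhere gives the zero matrix. -/
lemma eq_zero_of_mulVec {m n : ℕ} {M : Matrix (Fin m) (Fin n) ℝ}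
    (h : ∀ v, M *ᵥ v = 0) : M = 0 := by
  ext i j
  have := congrFun (h (Pi.single j 1)) i
  simpa [Matrix.mulVec_single] using this

theorem stmt4 {d k : ℕ} (hdk : d ≤ k)
    (X : Matrix (Fin d) (Fin k) ℝ) (hX : X.rank = d) :
    (∀ O : Matrix (Fin d) (Fin d) ℝ, O + Oᵀ = 0 →
      Xᵀ * (O * X) + (O * X)ᵀ * X = 0) ∧
    (∀ V : Matrix (Fin d) (Fin k) ℝ, V * Xᵀ = X * Vᵀ →
      Xᵀ * V + Vᵀ * X = 0 → V = 0) ∧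
    (∀ V : Matrix (Fin d) (Fin k) ℝ,
      Xᵀ * V + Vᵀ * X = 0 ↔ ∃ O : Matrix (Fin d) (Fin d) ℝ, O + Oᵀ = 0 ∧ V = O * X) := by
  classical
  -- rows of X are linearly independent
  have hinj : ∀ u : Fin d → ℝ, Xᵀ *ᵥ u = 0 → u = 0 := by
    intro u hu
    have hrk : Xᵀ.rank = d := by rw [Matrix.rank_transpose]; exact hX
    have hker : LinearMap.ker Xᵀ.mulVecLin = ⊥ := by
      have h1 := Xᵀ.mulVecLin.finrank_range_add_finrank_ker
      rw [show Module.finrank ℝ (LinearMap.range Xᵀ.mulVecLin) = d from hrk] at h1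
      simp only [Module.finrank_pi, Fintype.card_fin] at h1
      have h2 : Module.finrank ℝ (LinearMap.ker Xᵀ.mulVecLin) = 0 := by omega
      exact Submodule.finrank_eq_zero.mp h2
    have hmem : u ∈ LinearMap.ker Xᵀ.mulVecLin := by
      rw [LinearMap.mem_ker, Matrix.mulVecLin_apply]; exact hu
    rw [hker] at hmem
    simpa using hmem
  -- X * Xᵀ is positive definite
  have hA : (X * Xᵀ).PosDef := by
    refine Matrix.PosDef.of_dotProduct_mulVec_pos ?_ ?_
    · rw [Matrix.IsHermitian, Matrix.conjTranspose_eq_transpose_of_trivial,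
        Matrix.transpose_mul, Matrix.transpose_transpose]
    · intro x hx
      have hXx : Xᵀ *ᵥ x ≠ 0 := fun h => hx (hinj x h)
      have hnn : (0:ℝ) ≤ (Xᵀ *ᵥ x) ⬝ᵥ (Xᵀ *ᵥ x) :=
        Finset.sum_nonneg fun i _ => mul_self_nonneg _
      have hpos : (0:ℝ) < (Xᵀ *ᵥ x) ⬝ᵥ (Xᵀ *ᵥ x) := by
        rcases lt_or_eq_of_le hnn with h | h
        · exact h
        · exact absurd (dotProduct_self_eq_zero.mp h.symm) hXx
      have e : star x ⬝ᵥ (X * Xᵀ) *ᵥ x = (Xᵀ *ᵥ x) ⬝ᵥ (Xᵀ *ᵥ x) := by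
        rw [star_trivial, ← Matrix.mulVec_mulVec, Matrix.dotProduct_mulVec,
          ← Matrix.mulVec_transpose]
      rw [e]; exact hpos
  have hdet : IsUnit (X * Xᵀ).det := hA.det_pos.ne'.isUnit
  have hAinv : (X * Xᵀ) * (X * Xᵀ)⁻¹ = 1 := Matrix.mul_nonsing_inv _ hdet
  have hinvA : (X * Xᵀ)⁻¹ * (X * Xᵀ) = 1 := Matrix.nonsing_inv_mul _ hdet
  have hAsymm : (X * Xᵀ)ᵀ = X * Xᵀ := by
    rw [Matrix.transpose_mul, Matrix.transpose_transpose]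
  have hAinvsymm : ((X * Xᵀ)⁻¹)ᵀ = (X * Xᵀ)⁻¹ := by
    rw [Matrix.transpose_nonsing_inv, hAsymm]
  -- Part 1
  have part1 : ∀ O : Matrix (Fin d) (Fin d) ℝ, O + Oᵀ = 0 →
      Xᵀ * (O * X) + (O * X)ᵀ * X = 0 := by
    intro O hO
    have e : Xᵀ * (O * X) + (O * X)ᵀ * X = Xᵀ * ((O + Oᵀ) * X) := by
      rw [Matrix.transpose_mul]
      simp only [Matrix.add_mul, Matrix.mul_add, Matrix.mul_assoc]
    rw [e, hO, Matrix.zero_mul, Matrix.mul_zero]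
  -- Part 2
  have part2 : ∀ V : Matrix (Fin d) (Fin k) ℝ, V * Xᵀ = X * Vᵀ →
      Xᵀ * V + Vᵀ * X = 0 → V = 0 := by
    intro V hsym h0
    have hSsymm : (V * Xᵀ)ᵀ = V * Xᵀ := by
      rw [Matrix.transpose_mul, Matrix.transpose_transpose, ← hsym]
    have hAS : (X * Xᵀ) * (V * Xᵀ) + (V * Xᵀ) * (X * Xᵀ) = 0 := by
      have e : X * (Xᵀ * V + Vᵀ * X) * Xᵀ
          = (X * Xᵀ) * (V * Xᵀ) + (X * Vᵀ) * (X * Xᵀ) := by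
        simp only [Matrix.mul_add, Matrix.add_mul, Matrix.mul_assoc]
      rw [← hsym] at e
      rw [← e, h0, Matrix.mul_zero, Matrix.zero_mul]
    set S := V * Xᵀ with hSdef
    set A := X * Xᵀ with hAdef
    have htr : (S * A * S).trace = 0 := by
      have h2 : S * (A * S) + S * (S * A) = 0 := by
        rw [← Matrix.mul_add, hAS, Matrix.mul_zero]
      have h3 : (S * (A * S)).trace + (S * (S * A)).trace = 0 := by
        rw [← Matrix.trace_add, h2, Matrix.trace_zero]
      have e1 : (S * (A * S)).trace = (S * A * S).trace := by rw [← Matrix.mul_assoc]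
      have e2 : (S * (S * A)).trace = (S * A * S).trace := by
        rw [Matrix.trace_mul_comm]
      rw [e1, e2, ← two_mul] at h3
      linarith
    have hpsd : (S * A * S).PosSemidef := by
      have h4 := hA.posSemidef.conjTranspose_mul_mul_same S
      rwa [Matrix.conjTranspose_eq_transpose_of_trivial, hSsymm] at h4
    have hSAS : S * A * S = 0 := psd_trace_zero hpsd htr
    have hSzero : S = 0 := by
      apply eq_zero_of_mulVec
      intro v
      by_contra hne
      have hpos := hA.dotProduct_mulVec_pos hne
      have e : v ⬝ᵥ ((S * A * S) *ᵥ v) = star (S *ᵥ v) ⬝ᵥ A *ᵥ (S *ᵥ v) := by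
        rw [← Matrix.mulVec_mulVec, ← Matrix.mulVec_mulVec, Matrix.dotProduct_mulVec,
          ← Matrix.mulVec_transpose, hSsymm, star_trivial]
      rw [hSAS] at e
      simp only [Matrix.zero_mulVec, dotProduct_zero] at e
      rw [← e] at hpos
      exact lt_irrefl 0 hpos
    have hXVt : X * Vᵀ = 0 := by rw [← hsym]; exact hSzero
    have hAV : A * V = 0 := by
      have e : X * (Xᵀ * V + Vᵀ * X) = A * V + (X * Vᵀ) * X := by
        rw [hAdef]
        simp only [Matrix.mul_add, Matrix.mul_assoc]
      rw [h0, Matrix.mul_zero, hXVt, Matrix.zero_mul, add_zero] at e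
      exact e.symm
    calc V = (A⁻¹ * A) * V := by rw [hinvA, Matrix.one_mul]
      _ = A⁻¹ * (A * V) := by rw [Matrix.mul_assoc]
      _ = 0 := by rw [hAV, Matrix.mul_zero]
  refine ⟨part1, part2, ?_⟩
  -- Part 3
  intro V
  constructor
  · intro hV
    have hconj : (X * Xᵀ) * (V * Xᵀ) + (X * Vᵀ) * (X * Xᵀ) = 0 := by
      have e : X * (Xᵀ * V + Vᵀ * X) * Xᵀ
          = (X * Xᵀ) * (V * Xᵀ) + (X * Vᵀ) * (X * Xᵀ) := by
        simp only [Matrix.mul_add, Matrix.add_mul, Matrix.mul_assoc]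
      rw [← e, hV, Matrix.mul_zero, Matrix.zero_mul]
    have hXVt : X * Vᵀ = -((X * Xᵀ) * (V * Xᵀ) * (X * Xᵀ)⁻¹) := by
      have h5 : ((X * Xᵀ) * (V * Xᵀ) + (X * Vᵀ) * (X * Xᵀ)) * (X * Xᵀ)⁻¹ = 0 := by
        rw [hconj, Matrix.zero_mul]
      rw [Matrix.add_mul, Matrix.mul_assoc (X * Vᵀ), hAinv, Matrix.mul_one] at h5
      exact eq_neg_of_add_eq_zero_right h5
    have hOskew : (V * Xᵀ) * (X * Xᵀ)⁻¹ + ((V * Xᵀ) * (X * Xᵀ)⁻¹)ᵀ = 0 := by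
      have hOT : ((V * Xᵀ) * (X * Xᵀ)⁻¹)ᵀ = -((V * Xᵀ) * (X * Xᵀ)⁻¹) := by
        rw [Matrix.transpose_mul, hAinvsymm, Matrix.transpose_mul,
          Matrix.transpose_transpose, hXVt, Matrix.mul_neg]
        congr 1
        calc (X * Xᵀ)⁻¹ * ((X * Xᵀ) * (V * Xᵀ) * (X * Xᵀ)⁻¹)
            = ((X * Xᵀ)⁻¹ * (X * Xᵀ)) * (V * Xᵀ) * (X * Xᵀ)⁻¹ := by
              simp only [Matrix.mul_assoc]
          _ = V * Xᵀ * (X * Xᵀ)⁻¹ := by rw [hinvA, Matrix.one_mul]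
      rw [hOT, add_neg_cancel]
    refine ⟨(V * Xᵀ) * (X * Xᵀ)⁻¹, hOskew, ?_⟩
    have h1 : (V - ((V * Xᵀ) * (X * Xᵀ)⁻¹) * X) * Xᵀ = 0 := by
      rw [Matrix.sub_mul]
      have e : ((V * Xᵀ) * (X * Xᵀ)⁻¹) * X * Xᵀ = V * Xᵀ := by
        rw [Matrix.mul_assoc ((V * Xᵀ) * (X * Xᵀ)⁻¹), Matrix.mul_assoc (V * Xᵀ),
          hinvA, Matrix.mul_one]
      rw [e, sub_self]
    have hW : V - ((V * Xᵀ) * (X * Xᵀ)⁻¹) * X = 0 := by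
      apply part2
      · have h2 : X * (V - ((V * Xᵀ) * (X * Xᵀ)⁻¹) * X)ᵀ = 0 := by
          have := congrArg Matrix.transpose h1
          rwa [Matrix.transpose_mul, Matrix.transpose_transpose,
            Matrix.transpose_zero] at this
        rw [h1, h2]
      · have hp1 := part1 _ hOskew
        have e : Xᵀ * (V - ((V * Xᵀ) * (X * Xᵀ)⁻¹) * X)
              + (V - ((V * Xᵀ) * (X * Xᵀ)⁻¹) * X)ᵀ * X
            = (Xᵀ * V + Vᵀ * X)
              - (Xᵀ * (((V * Xᵀ) * (X * Xᵀ)⁻¹) * X)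
                + (((V * Xᵀ) * (X * Xᵀ)⁻¹) * X)ᵀ * X) := by
          rw [Matrix.transpose_sub]
          simp only [Matrix.mul_sub, Matrix.sub_mul]
          abel
        rw [e, hV, hp1, sub_zero]
    exact sub_eq_zero.mp hW
  · rintro ⟨O, hO, rfl⟩
    exact part1 O hO
end

section
/- Let d ≤ k and let X, X̃ ∈ ℝ^{d×k} both have full rank d, with Gram matrices G = XᵀX and G̃ = X̃ᵀX̃. If ‖G − G̃‖_F ≤ σ_d(X)²/2, then ρ(X, X̃) ≤ (σ_d(X)/√2) · (1 − √(1 − 2‖G − G̃‖_F/σ_d(X)²)). -/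
open Matrix

namespace Stmt5Aux

/-- Frobenius inner product. -/
noncomputable def ip {m n : ℕ} (A B : Matrix (Fin m) (Fin n) ℝ) : ℝ :=
  ∑ i, ∑ j, A i j * B i j

variable {m n p q : ℕ}

lemma ip_comm (A B : Matrix (Fin m) (Fin n) ℝ) : ip A B = ip B A := by
  simp [ip, mul_comm]

lemma ip_self_nonneg (A : Matrix (Fin m) (Fin n) ℝ) : 0 ≤ ip A A :=
  Finset.sum_nonneg fun i _ => Finset.sum_nonneg fun j _ => mul_self_nonneg _

lemma frob_eq_ip (A : Matrix (Fin m) (Fin n) ℝ) : frobNorm A = Real.sqrt (ip A A) := by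
  simp [frobNorm, ip, sq]

lemma ip_add_left (A B C : Matrix (Fin m) (Fin n) ℝ) : ip (A + B) C = ip A C + ip B C := by
  simp [ip, add_mul, Finset.sum_add_distrib]

lemma ip_sub_left (A B C : Matrix (Fin m) (Fin n) ℝ) : ip (A - B) C = ip A C - ip B C := by
  simp [ip, sub_mul, Finset.sum_sub_distrib]

lemma ip_add_right (A B C : Matrix (Fin m) (Fin n) ℝ) : ip A (B + C) = ip A B + ip A C := by
  rw [ip_comm, ip_add_left, ip_comm B A, ip_comm C A]

lemma ip_sub_right (A B C : Matrix (Fin m) (Fin n) ℝ) : ip A (B - C) = ip A B - ip A C := by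
  rw [ip_comm, ip_sub_left, ip_comm B A, ip_comm C A]

lemma ip_flat (A B : Matrix (Fin m) (Fin n) ℝ) :
    ip A B = ∑ x : Fin m × Fin n, A x.1 x.2 * B x.1 x.2 := by
  rw [ip, Fintype.sum_prod_type]

lemma ip_cs (A B : Matrix (Fin m) (Fin n) ℝ) : (ip A B)^2 ≤ ip A A * ip B B := by
  rw [ip_flat, ip_flat A A, ip_flat B B]
  have := Finset.sum_mul_sq_le_sq_mul_sq Finset.univ
    (fun x : Fin m × Fin n => A x.1 x.2) (fun x => B x.1 x.2)
  simpa [sq] using this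

lemma abs_ip_le (A B : Matrix (Fin m) (Fin n) ℝ) :
    |ip A B| ≤ Real.sqrt (ip A A) * Real.sqrt (ip B B) := by
  have h := ip_cs A B
  have := Real.sqrt_le_sqrt h
  rwa [Real.sqrt_sq_eq_abs, Real.sqrt_mul (ip_self_nonneg A)] at this

lemma ip_expand_add (A B : Matrix (Fin m) (Fin n) ℝ) :
    ip (A + B) (A + B) = ip A A + 2 * ip A B + ip B B := by
  rw [ip_add_left, ip_add_right, ip_add_right, ip_comm B A]; ring

lemma frob_triangle (A B : Matrix (Fin m) (Fin n) ℝ) :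
    frobNorm (A + B) ≤ frobNorm A + frobNorm B := by
  rw [frob_eq_ip, frob_eq_ip, frob_eq_ip]
  have h1 : ip (A+B) (A+B) ≤ (Real.sqrt (ip A A) + Real.sqrt (ip B B))^2 := by
    rw [ip_expand_add]
    have hA := Real.sq_sqrt (ip_self_nonneg A)
    have hB := Real.sq_sqrt (ip_self_nonneg B)
    have := (abs_le.mp (abs_ip_le A B)).2
    nlinarith [Real.sqrt_nonneg (ip A A), Real.sqrt_nonneg (ip B B)]
  calc Real.sqrt (ip (A+B) (A+B)) ≤ Real.sqrt ((Real.sqrt (ip A A) + Real.sqrt (ip B B))^2) :=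
        Real.sqrt_le_sqrt h1
    _ = Real.sqrt (ip A A) + Real.sqrt (ip B B) := by
        rw [Real.sqrt_sq (by positivity)]

lemma ip_transpose (A B : Matrix (Fin m) (Fin n) ℝ) : ip Aᵀ Bᵀ = ip A B := by
  rw [ip, ip, Finset.sum_comm]; simp [transpose_apply]

lemma ip_mul_left (U : Matrix (Fin m) (Fin p) ℝ) (V : Matrix (Fin p) (Fin n) ℝ)
    (W : Matrix (Fin m) (Fin n) ℝ) : ip (U * V) W = ip V (Uᵀ * W) := by
  calc ip (U * V) W = ∑ i, ∑ l, ∑ j, U i l * V l j * W i j := by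
        simp only [ip, mul_apply, Finset.sum_mul]
        exact Finset.sum_congr rfl fun i _ => Finset.sum_comm
    _ = ∑ l, ∑ i, ∑ j, U i l * V l j * W i j := Finset.sum_comm
    _ = ip V (Uᵀ * W) := by
        simp only [ip, mul_apply, transpose_apply, Finset.mul_sum]
        refine Finset.sum_congr rfl fun l _ => ?_
        rw [Finset.sum_comm]
        exact Finset.sum_congr rfl fun j _ => Finset.sum_congr rfl fun i _ => by ring

lemma ip_mul_right (U : Matrix (Fin m) (Fin p) ℝ) (V : Matrix (Fin p) (Fin n) ℝ)
    (W : Matrix (Fin m) (Fin n) ℝ) : ip (U * V) W = ip U (W * Vᵀ) := by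
  simp only [ip, mul_apply, transpose_apply, Finset.sum_mul, Finset.mul_sum]
  refine Finset.sum_congr rfl fun i _ => ?_
  rw [Finset.sum_comm]
  refine Finset.sum_congr rfl fun l _ => ?_
  exact Finset.sum_congr rfl fun j _ => by ring

lemma trace_mul_eq_ip (P S : Matrix (Fin m) (Fin m) ℝ) : trace (P * S) = ip P Sᵀ := by
  simp only [trace, ip, mul_apply, diag_apply, transpose_apply]

noncomputable def HH (u : Fin d → ℝ) : Matrix (Fin d) (Fin d) ℝ :=
  1 - (2:ℝ) • vecMulVec u u

lemma vmv_mul_vmv (u v w x : Fin d → ℝ) :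
    vecMulVec u v * vecMulVec w x = (v ⬝ᵥ w) • vecMulVec u x := by
  ext i j
  simp only [mul_apply, vecMulVec_apply, Matrix.smul_apply, dotProduct, smul_eq_mul,
    Finset.sum_mul]
  exact Finset.sum_congr rfl fun l _ => by ring

lemma vmv_transpose (u v : Fin d → ℝ) : (vecMulVec u v)ᵀ = vecMulVec v u := by
  ext i j; simp [vecMulVec_apply]; ring

lemma HH_transpose (u : Fin d → ℝ) : (HH u)ᵀ = HH u := by
  simp [HH, transpose_sub, transpose_smul, vmv_transpose]

lemma HH_orth {u : Fin d → ℝ} (hu : u ⬝ᵥ u = 1) : (HH u)ᵀ * HH u = 1 := by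
  rw [HH_transpose]
  simp only [HH, sub_mul, mul_sub, one_mul, mul_one, Matrix.smul_mul, Matrix.mul_smul,
    vmv_mul_vmv, hu, one_smul, smul_smul]
  ext i j
  simp [smul_smul]
  ring

lemma trace_vmv_mul (u v : Fin d → ℝ) (S : Matrix (Fin d) (Fin d) ℝ) :
    trace (vecMulVec u v * S) = v ⬝ᵥ S.mulVec u := by
  simp only [trace, diag_apply, mul_apply, vecMulVec_apply, dotProduct, mulVec]
  rw [Finset.sum_comm]
  exact Finset.sum_congr rfl fun l _ => by rw [Finset.mul_sum]; exact Finset.sum_congr rfl fun i _ => by ring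

lemma trace_HH_mul (u : Fin d → ℝ) (S : Matrix (Fin d) (Fin d) ℝ) :
    trace (HH u * S) = trace S - 2 * (u ⬝ᵥ S.mulVec u) := by
  simp only [HH, sub_mul, one_mul, Matrix.smul_mul, trace_sub, trace_smul, trace_vmv_mul,
    smul_eq_mul]

section MaxCons
variable (S : Matrix (Fin d) (Fin d) ℝ)
  (hmax : ∀ R : Matrix (Fin d) (Fin d) ℝ, Rᵀ * R = 1 → trace (R * S) ≤ trace S)

include hmax

lemma qf_nonneg_unit {u : Fin d → ℝ} (hu : u ⬝ᵥ u = 1) : 0 ≤ u ⬝ᵥ S.mulVec u := by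
  have h := hmax (HH u) (HH_orth hu)
  rw [trace_HH_mul] at h
  linarith

lemma qf_nonneg (w : Fin d → ℝ) : 0 ≤ w ⬝ᵥ S.mulVec w := by
  rcases eq_or_ne w 0 with h | h
  · simp [h]
  · have hw : 0 < w ⬝ᵥ w := by
      rcases Function.ne_iff.mp h with ⟨i, hi⟩
      have : (0:ℝ) < w i * w i := mul_self_pos.mpr (by simpa using hi)
      have hsum : ∀ j, 0 ≤ w j * w j := fun j => mul_self_nonneg _
      exact Finset.sum_pos' (fun j _ => hsum j) ⟨i, Finset.mem_univ i, this⟩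
    set c := Real.sqrt (w ⬝ᵥ w) with hc
    have hcpos : 0 < c := Real.sqrt_pos.mpr hw
    have hc2 : c * c = w ⬝ᵥ w := Real.mul_self_sqrt hw.le
    have hu : (c⁻¹ • w) ⬝ᵥ (c⁻¹ • w) = 1 := by
      rw [smul_dotProduct, dotProduct_smul]
      field_simp
      rw [← hc2, smul_eq_mul, smul_eq_mul]; field_simp
    have h := qf_nonneg_unit S hmax hu
    rw [mulVec_smul, smul_dotProduct, dotProduct_smul] at h
    have hcc : (0:ℝ) < c⁻¹ * c⁻¹ := by positivity
    simp only [smul_eq_mul] at h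
    nlinarith [h, hcc]

lemma double_hh {u v : Fin d → ℝ} (hu : u ⬝ᵥ u = 1) (hv : v ⬝ᵥ v = 1) :
    0 ≤ (u ⬝ᵥ S.mulVec u) + (v ⬝ᵥ S.mulVec v) - 2 * (u ⬝ᵥ v) * (v ⬝ᵥ S.mulVec u) := by
  have horth : (HH u * HH v)ᵀ * (HH u * HH v) = 1 := by
    rw [transpose_mul, mul_assoc, ← mul_assoc (HH u)ᵀ, HH_orth hu, one_mul, HH_orth hv]
  have h := hmax _ horth
  have hexp : HH u * HH v = 1 - (2:ℝ) • vecMulVec u u - (2:ℝ) • vecMulVec v v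
      + (4 * (u ⬝ᵥ v)) • vecMulVec u v := by
    simp only [HH, sub_mul, mul_sub, one_mul, mul_one, Matrix.smul_mul, Matrix.mul_smul,
      vmv_mul_vmv, smul_smul]
    norm_num
    module
  rw [hexp] at h
  simp only [Matrix.add_mul, Matrix.sub_mul, one_mul, Matrix.smul_mul, trace_add, trace_sub,
    trace_smul, trace_vmv_mul, smul_eq_mul] at h
  linarith

end MaxCons

lemma sum_two {i j : Fin d} (hij : i ≠ j) (f : Fin d → ℝ)
    (h0 : ∀ l, l ≠ i → l ≠ j → f l = 0) : ∑ l, f l = f i + f j := by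
  rw [← Finset.sum_pair hij]
  exact (Finset.sum_subset (Finset.subset_univ _)
    (fun x _ hx => h0 x (fun h => hx (by simp [h])) (fun h => hx (by simp [h])))).symm

section Symm
variable (S : Matrix (Fin d) (Fin d) ℝ)

theorem S_symm
    (hqf : ∀ w : Fin d → ℝ, 0 ≤ w ⬝ᵥ S.mulVec w)
    (hdbl : ∀ u v : Fin d → ℝ, u ⬝ᵥ u = 1 → v ⬝ᵥ v = 1 →
      0 ≤ (u ⬝ᵥ S.mulVec u) + (v ⬝ᵥ S.mulVec v) - 2 * (u ⬝ᵥ v) * (v ⬝ᵥ S.mulVec u)) :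
    Sᵀ = S := by
  ext j i
  rcases eq_or_ne i j with rfl | hij
  · rfl
  show S i j = S j i
  have key : ∀ c s : ℝ, c^2 + s^2 = 1 →
      0 ≤ s^2 * (S i i + S j j) + c * s * (S i j - S j i) := by
    intro c s hcs
    set u : Fin d → ℝ := fun l => if l = i then 1 else 0 with hu
    set v : Fin d → ℝ := fun l => if l = i then c else if l = j then s else 0 with hv
    have huu : u ⬝ᵥ u = 1 := by
      rw [dotProduct, sum_two hij]
      · simp [hu, Ne.symm hij]
      · intro l h1 h2; simp [hu, h1]
    have hvv : v ⬝ᵥ v = 1 := by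
      rw [dotProduct, sum_two hij]
      · simp only [hv, if_pos rfl, if_neg (Ne.symm hij)]
        simpa [sq] using hcs
      · intro l h1 h2; simp [hv, h1, h2]
    have h := hdbl u v huu hvv
    have emv : ∀ w : Fin d → ℝ, ∀ l, S.mulVec w l = ∑ p, S l p * w p := by
      intro w l; simp [mulVec, dotProduct]
    have e1 : u ⬝ᵥ S.mulVec u = S i i := by
      rw [dotProduct, sum_two hij]
      · simp only [hu, if_pos rfl, if_neg (Ne.symm hij)]
        rw [emv, emv, Finset.sum_eq_single i]
        · simp
        · intro l _ hl; simp [hu, hl]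
        · intro hl; exact absurd (Finset.mem_univ i) hl
      · intro l h1 h2; simp [hu, h1]
    have euv : u ⬝ᵥ v = c := by
      rw [dotProduct, sum_two hij]
      · simp [hu, hv, Ne.symm hij]
      · intro l h1 h2; simp [hu, h1]
    have hmv : ∀ l, S.mulVec v l = c * S l i + s * S l j := by
      intro l
      rw [emv, sum_two hij]
      · simp [hv, Ne.symm hij]; ring
      · intro p h1 h2; simp [hv, h1, h2]
    have e3 : v ⬝ᵥ S.mulVec u = c * S i i + s * S j i := by
      rw [dotProduct, sum_two hij]
      · have : ∀ l, S.mulVec u l = S l i := by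
          intro l
          rw [emv, Finset.sum_eq_single i]
          · simp [hu]
          · intro p _ hp; simp [hu, hp]
          · intro hl; exact absurd (Finset.mem_univ i) hl
        simp [hv, this, Ne.symm hij]
      · intro l h1 h2; simp [hv, h1, h2]
    have e4 : v ⬝ᵥ S.mulVec v
        = c * (c * S i i + s * S i j) + s * (c * S j i + s * S j j) := by
      rw [dotProduct, sum_two hij]
      · simp [hv, hmv, Ne.symm hij]; rw [← hv, hmv, hmv]
      · intro l h1 h2; simp [hv, h1, h2]
    rw [e1, euv, e3, e4] at h
    have heq : s^2 * (S i i + S j j) + c * s * (S i j - S j i)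
        = S i i + (c * (c * S i i + s * S i j) + s * (c * S j i + s * S j j))
          - 2 * c * (c * S i i + s * S j i) := by
      linear_combination (S i i) * hcs
    linarith [h, heq.ge, heq.le]
  have hT : 0 ≤ S i i + S j j := by
    have h1 := hqf (fun l => if l = i then 1 else 0)
    have h2 := hqf (fun l => if l = j then 1 else 0)
    have e1 : (fun l => if l = i then (1:ℝ) else 0) ⬝ᵥ
        S.mulVec (fun l => if l = i then 1 else 0) = S i i := by
      rw [dotProduct, Finset.sum_eq_single i]
      · simp only [if_pos rfl, one_mul, mulVec, dotProduct]
        rw [Finset.sum_eq_single i]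
        · simp
        · intro p _ hp; simp [hp]
        · intro hl; exact absurd (Finset.mem_univ i) hl
      · intro l _ hl; simp [hl]
      · intro hl; exact absurd (Finset.mem_univ i) hl
    have e2 : (fun l => if l = j then (1:ℝ) else 0) ⬝ᵥ
        S.mulVec (fun l => if l = j then 1 else 0) = S j j := by
      rw [dotProduct, Finset.sum_eq_single j]
      · simp only [if_pos rfl, one_mul, mulVec, dotProduct]
        rw [Finset.sum_eq_single j]
        · simp
        · intro p _ hp; simp [hp]
        · intro hl; exact absurd (Finset.mem_univ j) hl
      · intro l _ hl; simp [hl]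
      · intro hl; exact absurd (Finset.mem_univ j) hl
    rw [e1] at h1; rw [e2] at h2; linarith
  obtain ⟨T, hTdef⟩ : ∃ T, T = S i i + S j j := ⟨_, rfl⟩
  obtain ⟨D, hDdef⟩ : ∃ D, D = S i j - S j i := ⟨_, rfl⟩
  have key' : ∀ c s : ℝ, c^2 + s^2 = 1 → 0 ≤ s^2 * T + c * s * D := by
    intro c s hcs
    rw [hTdef, hDdef]; exact key c s hcs
  rw [← hTdef] at hT
  have hD : D = 0 := by
    by_contra hD0
    have habs : 0 < |D| := abs_pos.mpr hD0
    set t := min (1/2) (|D| / (4 * (T + 1))) with ht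
    have htpos : 0 < t := lt_min (by norm_num) (by positivity)
    have hthalf : t ≤ 1/2 := min_le_left _ _
    have ht1 : t^2 ≤ 1 := by nlinarith
    set c := Real.sqrt (1 - t^2) with hc
    have hc2 : c^2 = 1 - t^2 := Real.sq_sqrt (by linarith)
    have hchalf : (1/2 : ℝ) ≤ c := by
      rw [hc, show (1/2 : ℝ) = Real.sqrt (1/4) by
        rw [show (1/4 : ℝ) = (1/2)^2 by norm_num, Real.sqrt_sq]; norm_num]
      apply Real.sqrt_le_sqrt; nlinarith
    have k1 := key' c t (by linarith)
    have k2 := key' c (-t) (by rw [neg_pow]; simp; linarith)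
    have hcase : c * t * |D| ≤ t^2 * T := by
      rcases abs_cases D with ⟨hD1, _⟩ | ⟨hD1, _⟩
      · rw [hD1]; nlinarith [k2]
      · rw [hD1]; nlinarith [k1]
    have h4 : t * T < |D|/4 := by
      have h1 : t * T ≤ |D| / (4 * (T+1)) * T :=
        mul_le_mul_of_nonneg_right (min_le_right _ _) (by linarith)
      have h2 : |D| / (4 * (T+1)) * T < |D| / 4 := by
        rw [div_mul_eq_mul_div, div_lt_div_iff₀ (by positivity) (by norm_num)]
        nlinarith [habs]
      linarith
    have h5 : t * (c * |D|) < t * (|D|/4) := by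
      calc t * (c * |D|) ≤ t * (t * T) := by nlinarith [hcase]
        _ < t * (|D|/4) := mul_lt_mul_of_pos_left h4 htpos
    have h7 : c * |D| < |D|/4 := (mul_lt_mul_iff_right₀ htpos).mp h5
    nlinarith [h7, hchalf, habs, mul_le_mul_of_nonneg_right hchalf habs.le]
  rw [hDdef] at hD; linarith

end Symm
lemma exists_max_orth (N : Matrix (Fin d) (Fin d) ℝ) :
    ∃ Q : Matrix (Fin d) (Fin d) ℝ, Qᵀ * Q = 1 ∧
      ∀ R : Matrix (Fin d) (Fin d) ℝ, Rᵀ * R = 1 → ip R N ≤ ip Q N := by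
  set O : Set (Matrix (Fin d) (Fin d) ℝ) := {Q | Qᵀ * Q = 1} with hO
  have hclosed : IsClosed O :=
    isClosed_eq ((continuous_id.matrix_transpose).matrix_mul continuous_id) continuous_const
  have hK : IsCompact (Set.univ.pi fun _ : Fin d =>
      Set.univ.pi fun _ : Fin d => Set.Icc (-1:ℝ) 1) :=
    isCompact_univ_pi fun _ => isCompact_univ_pi fun _ => isCompact_Icc
  have hsub : O ⊆ Set.univ.pi fun _ : Fin d =>
      Set.univ.pi fun _ : Fin d => Set.Icc (-1:ℝ) 1 := by
    intro Q hQ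
    refine Set.mem_pi.mpr ?_
    intro i _
    rw [Set.mem_pi]
    intro j _
    have h1 : (Qᵀ * Q) j j = 1 := by rw [hQ]; simp
    rw [mul_apply] at h1
    simp only [transpose_apply] at h1
    have hle : Q i j * Q i j ≤ 1 := by
      rw [← h1]
      exact Finset.single_le_sum (f := fun l => Q l j * Q l j)
        (fun l _ => mul_self_nonneg _) (Finset.mem_univ i)
    constructor <;> nlinarith
  have hcomp : IsCompact O := hK.of_isClosed_subset hclosed hsub
  have hne : O.Nonempty := ⟨1, by simp [hO]⟩
  have hf : Continuous fun Q : Matrix (Fin d) (Fin d) ℝ => ip Q N := by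
    apply continuous_finset_sum
    intro i _
    apply continuous_finset_sum
    intro j _
    exact (continuous_id.matrix_elem i j).mul continuous_const
  obtain ⟨Q, hQO, hQmax⟩ := hcomp.exists_isMaxOn hne hf.continuousOn
  exact ⟨Q, hQO, fun R hR => hQmax hR⟩

lemma euclNorm_nonneg (v : Fin d → ℝ) : 0 ≤ euclNorm v := Real.sqrt_nonneg _

lemma euclNorm_sq (v : Fin d → ℝ) : (euclNorm v)^2 = ∑ i, v i ^ 2 :=
  Real.sq_sqrt (Finset.sum_nonneg fun i _ => sq_nonneg _)

lemma bddBelow_sigma (X : Matrix (Fin d) (Fin k) ℝ) :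
    BddBelow {r | ∃ u : Fin d → ℝ, euclNorm u = 1 ∧ r = euclNorm (Matrix.vecMul u X)} :=
  ⟨0, fun r ⟨u, _, hr⟩ => hr ▸ Real.sqrt_nonneg _⟩

lemma sigmaMin_nonneg (X : Matrix (Fin d) (Fin k) ℝ) : 0 ≤ sigmaMin X :=
  Real.sInf_nonneg fun r ⟨u, _, hr⟩ => hr ▸ Real.sqrt_nonneg _

lemma sigma_le (X : Matrix (Fin d) (Fin k) ℝ) {u : Fin d → ℝ} (hu : euclNorm u = 1) :
    sigmaMin X ≤ euclNorm (Matrix.vecMul u X) :=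
  csInf_le (bddBelow_sigma X) ⟨u, hu, rfl⟩

lemma sig_quad (X : Matrix (Fin d) (Fin k) ℝ) (v : Fin d → ℝ) :
    sigmaMin X ^ 2 * (∑ i, v i ^ 2) ≤ ∑ j, (Matrix.vecMul v X j) ^ 2 := by
  rcases eq_or_ne v 0 with rfl | hv
  · simp
  · have hpos : 0 < ∑ i, v i ^ 2 := by
      rcases Function.ne_iff.mp hv with ⟨i, hi⟩
      have hi' : v i ≠ 0 := by simpa using hi
      exact Finset.sum_pos' (fun j _ => sq_nonneg _)
        ⟨i, Finset.mem_univ i, by rcases lt_or_gt_of_ne hi' with h | h <;> nlinarith⟩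
    set c := Real.sqrt (∑ i, v i ^ 2) with hc
    have hcpos : 0 < c := Real.sqrt_pos.mpr hpos
    have hc2 : c^2 = ∑ i, v i ^ 2 := Real.sq_sqrt hpos.le
    have hu : euclNorm (c⁻¹ • v) = 1 := by
      unfold euclNorm
      rw [Real.sqrt_eq_one]
      simp only [Pi.smul_apply, smul_eq_mul, mul_pow]
      rw [← Finset.mul_sum, ← hc2]
      field_simp
    have hle := sigma_le X hu
    have hsq : sigmaMin X ^ 2 ≤ ∑ j, (Matrix.vecMul (c⁻¹ • v) X j)^2 := by
      have h2 : sigmaMin X ^2 ≤ (euclNorm (Matrix.vecMul (c⁻¹ • v) X))^2 := by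
        apply pow_le_pow_left₀ (sigmaMin_nonneg X) hle
      rwa [euclNorm_sq] at h2
    have hvm : ∀ j, Matrix.vecMul (c⁻¹ • v) X j = c⁻¹ * Matrix.vecMul v X j := by
      intro j; rw [Matrix.smul_vecMul]; simp
    simp only [hvm, mul_pow] at hsq
    rw [← Finset.mul_sum] at hsq
    have : c⁻¹^2 = (∑ i, v i ^ 2)⁻¹ := by
      rw [← hc2, ← inv_pow]
    rw [this] at hsq
    calc sigmaMin X ^2 * (∑ i, v i ^2) ≤ ((∑ i, v i ^ 2)⁻¹ * ∑ j, Matrix.vecMul v X j ^ 2) * (∑ i, v i ^2) :=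
          mul_le_mul_of_nonneg_right hsq hpos.le
      _ = ∑ j, Matrix.vecMul v X j ^ 2 := by field_simp
  
lemma vecMul_ne_zero_of_rank (X : Matrix (Fin d) (Fin k) ℝ) (hX : X.rank = d)
    {u : Fin d → ℝ} (hu : Matrix.vecMul u X = 0) : u = 0 := by
  have hrange : LinearMap.range X.mulVecLin = ⊤ := by
    apply Submodule.eq_top_of_finrank_eq
    rw [← Matrix.rank, hX]
    rw [Module.finrank_pi]
    simp
  obtain ⟨v, hv⟩ := LinearMap.range_eq_top.mp hrange u
  have h0 : u ⬝ᵥ X.mulVec v = 0 := by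
    rw [Matrix.dotProduct_mulVec, hu]
    simp
  rw [Matrix.mulVecLin_apply] at hv
  rw [hv] at h0
  funext i
  have : ∑ l, u l * u l = 0 := h0
  have hz := (Finset.sum_eq_zero_iff_of_nonneg (fun l _ => mul_self_nonneg (u l))).mp this
  have := hz i (Finset.mem_univ i)
  simpa [mul_self_eq_zero] using this

lemma continuous_euclNorm {n : ℕ} : Continuous (fun v : Fin n → ℝ => euclNorm v) := by
  unfold euclNorm
  exact Real.continuous_sqrt.comp (continuous_finset_sum _ fun i _ => (continuous_apply i).pow 2)

lemma sigma_pos (hd : 0 < d) (X : Matrix (Fin d) (Fin k) ℝ) (hX : X.rank = d) :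
    0 < sigmaMin X := by
  set g : (Fin d → ℝ) → ℝ := fun u => euclNorm (Matrix.vecMul u X) with hg
  set Sp : Set (Fin d → ℝ) := {u | euclNorm u = 1} with hSp
  have hset : {r | ∃ u : Fin d → ℝ, euclNorm u = 1 ∧ r = euclNorm (Matrix.vecMul u X)}
      = g '' Sp := by
    ext r; constructor
    · rintro ⟨u, hu, rfl⟩; exact ⟨u, hu, rfl⟩
    · rintro ⟨u, hu, rfl⟩; exact ⟨u, hu, rfl⟩
  have hcont_norm : Continuous fun v : Fin d → ℝ => euclNorm v := continuous_euclNorm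
  have hgc : Continuous g := by
    rw [hg]
    apply (continuous_euclNorm (n := k)).comp
    apply continuous_pi
    intro j
    simp only [Matrix.vecMul, dotProduct]
    exact continuous_finset_sum _ fun i _ => (continuous_apply i).mul continuous_const
  have hclosed : IsClosed Sp := isClosed_eq hcont_norm continuous_const
  have hK : IsCompact (Set.univ.pi fun _ : Fin d => Set.Icc (-1:ℝ) 1) :=
    isCompact_univ_pi fun _ => isCompact_Icc
  have hsub : Sp ⊆ Set.univ.pi fun _ : Fin d => Set.Icc (-1:ℝ) 1 := by
    intro u hu
    rw [Set.mem_pi]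
    intro i _
    have h1 : ∑ l, u l ^ 2 = 1 := by
      have := hu
      rw [hSp] at this
      simp only [Set.mem_setOf_eq] at this
      unfold euclNorm at this
      rwa [Real.sqrt_eq_one] at this
    have hle : u i ^2 ≤ 1 := by
      rw [← h1]
      exact Finset.single_le_sum (f := fun l => u l ^2) (fun l _ => sq_nonneg _) (Finset.mem_univ i)
    constructor <;> nlinarith
  have hcomp : IsCompact Sp := hK.of_isClosed_subset hclosed hsub
  have hne : Sp.Nonempty := by
    refine ⟨fun l => if l = ⟨0, hd⟩ then 1 else 0, ?_⟩
    rw [hSp]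
    simp only [Set.mem_setOf_eq]
    unfold euclNorm
    rw [Real.sqrt_eq_one, Finset.sum_eq_single ⟨0, hd⟩]
    · simp
    · intro l _ hl; simp [hl]
    · intro hl; exact absurd (Finset.mem_univ _) hl
  have himg : IsCompact (g '' Sp) := hcomp.image hgc
  have hmem : sigmaMin X ∈ g '' Sp := by
    rw [sigmaMin, hset]
    exact himg.sInf_mem (hne.image g)
  obtain ⟨u, hu, hgu⟩ := hmem
  have hnn : 0 ≤ sigmaMin X := sigmaMin_nonneg X
  rcases hnn.lt_or_eq with h | h
  · exact h
  · exfalso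
    have hzero : euclNorm (Matrix.vecMul u X) = 0 := hgu.trans h.symm
    have hsum : ∑ j, (Matrix.vecMul u X j)^2 = 0 := by
      unfold euclNorm at hzero
      exact le_antisymm (Real.sqrt_eq_zero'.mp hzero)
        (Finset.sum_nonneg fun j _ => sq_nonneg _)
    have hvm : Matrix.vecMul u X = 0 := by
      funext j
      have hz := (Finset.sum_eq_zero_iff_of_nonneg (fun l _ => sq_nonneg (Matrix.vecMul u X l))).mp hsum
      have := hz j (Finset.mem_univ j)
      simpa [pow_eq_zero_iff] using this
    have hu0 : u = 0 := vecMul_ne_zero_of_rank X hX hvm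
    rw [hSp] at hu
    simp only [Set.mem_setOf_eq, hu0] at hu
    unfold euclNorm at hu
    simp at hu

lemma col_lower (X : Matrix (Fin d) (Fin k) ℝ) (E : Matrix (Fin d) (Fin m) ℝ) :
    sigmaMin X ^ 2 * ip E E ≤ ip (Xᵀ * E) (Xᵀ * E) := by
  have h1 : ip (Xᵀ * E) (Xᵀ * E) = ∑ q, ∑ j, (Matrix.vecMul (fun i => E i q) X j)^2 := by
    rw [ip, Finset.sum_comm]
    refine Finset.sum_congr rfl fun q _ => Finset.sum_congr rfl fun j _ => ?_
    rw [mul_apply]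
    simp only [transpose_apply, Matrix.vecMul, dotProduct]
    rw [sq]
    congr 1 <;> exact Finset.sum_congr rfl fun i _ => by ring
  have h2 : ip E E = ∑ q, ∑ i, E i q ^ 2 := by
    rw [ip, Finset.sum_comm]
    exact Finset.sum_congr rfl fun q _ => Finset.sum_congr rfl fun i _ => (sq (E i q)).symm
  rw [h1, h2, Finset.mul_sum]
  exact Finset.sum_le_sum fun q _ => sig_quad X (fun i => E i q)

lemma ip_psd (S : Matrix (Fin d) (Fin d) ℝ) (hq : ∀ w : Fin d → ℝ, 0 ≤ w ⬝ᵥ S.mulVec w)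
    (E : Matrix (Fin d) (Fin m) ℝ) : 0 ≤ ip S (E * Eᵀ) := by
  have h1 : ip S (E * Eᵀ) = ∑ q, ((fun i => E i q) ⬝ᵥ S.mulVec (fun i => E i q)) := by
    simp only [ip, mul_apply, transpose_apply, dotProduct, mulVec, Finset.mul_sum]
    calc ∑ i, ∑ j, ∑ q, S i j * (E i q * E j q)
        = ∑ i, ∑ q, ∑ j, S i j * (E i q * E j q) :=
          Finset.sum_congr rfl fun i _ => Finset.sum_comm
      _ = ∑ q, ∑ i, ∑ j, S i j * (E i q * E j q) := Finset.sum_comm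
      _ = ∑ q, ∑ i, ∑ j, E i q * (S i j * E j q) :=
          Finset.sum_congr rfl fun q _ => Finset.sum_congr rfl fun i _ =>
            Finset.sum_congr rfl fun j _ => by ring
  rw [h1]
  exact Finset.sum_nonneg fun q _ => hq _

lemma gram_cs (E : Matrix (Fin d) (Fin k) ℝ) : ip (Eᵀ * E) (Eᵀ * E) ≤ (ip E E)^2 := by
  have h2 : ip E E = ∑ p, ∑ i, E i p ^ 2 := by
    rw [ip, Finset.sum_comm]
    exact Finset.sum_congr rfl fun q _ => Finset.sum_congr rfl fun i _ => (sq (E i q)).symm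
  have h1 : ip (Eᵀ * E) (Eᵀ * E) = ∑ p, ∑ q, (∑ i, E i p * E i q)^2 := by
    simp only [ip, mul_apply, transpose_apply, sq]
  rw [h1, h2, sq, Finset.sum_mul_sum]
  refine Finset.sum_le_sum fun p _ => Finset.sum_le_sum fun q _ => ?_
  have := Finset.sum_mul_sq_le_sq_mul_sq Finset.univ (fun i => E i p) (fun i => E i q)
  calc (∑ i, E i p * E i q)^2 ≤ (∑ i, E i p ^2) * (∑ i, E i q ^2) := this
    _ = _ := rfl


lemma le_of_sq_le_sq {a b : ℝ} (ha : 0 ≤ a) (hb : 0 ≤ b) (h : a^2 ≤ b^2) : a ≤ b := by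
  nlinarith


end Stmt5Aux

set_option maxHeartbeats 1000000 in
theorem stmt5 {d k : ℕ} (hdk : d ≤ k)
    (X Xt : Matrix (Fin d) (Fin k) ℝ)
    (hX : X.rank = d) (hXt : Xt.rank = d)
    (hclose : frobNorm (Xᵀ * X - Xtᵀ * Xt) ≤ sigmaMin X ^ 2 / 2) :
    rho X Xt ≤ (sigmaMin X / Real.sqrt 2) *
      (1 - Real.sqrt (1 - 2 * frobNorm (Xᵀ * X - Xtᵀ * Xt) / sigmaMin X ^ 2)) := by
  open Stmt5Aux in
  rcases Nat.eq_zero_or_pos d with hd0 | hd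
  · -- degenerate case d = 0
    subst hd0
    have hrho : rho X Xt ≤ 0 := by
      have hbdd : BddBelow {r | ∃ Q : Matrix (Fin 0) (Fin 0) ℝ, Qᵀ * Q = 1 ∧
          r = frobNorm (X - Q * Xt)} := by
        refine ⟨0, ?_⟩
        rintro r ⟨Q, _, hr⟩
        exact hr ▸ Real.sqrt_nonneg _
      apply csInf_le hbdd
      refine ⟨1, by simp, ?_⟩
      simp [frobNorm]
    have hσ : sigmaMin X = 0 := by
      unfold sigmaMin
      have hempty : {r | ∃ u : Fin 0 → ℝ, euclNorm u = 1 ∧ r = euclNorm (Matrix.vecMul u X)}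
          = (∅ : Set ℝ) := by
        ext r
        simp only [Set.mem_setOf_eq, Set.mem_empty_iff_false, iff_false, not_exists]
        intro u h
        rcases h with ⟨h1, _⟩
        simp [euclNorm] at h1
      rw [hempty, Real.sInf_empty]
    rw [hσ]
    simpa using hrho
  · -- main case
    have hσ : 0 < sigmaMin X := Stmt5Aux.sigma_pos hd X hX
    obtain ⟨Q₀, hQ₀, hQmax⟩ := Stmt5Aux.exists_max_orth (X * Xtᵀ)
    set S' : Matrix (Fin d) (Fin d) ℝ := Q₀ * (Xt * Xᵀ) with hS'
    have htrace : ∀ Q : Matrix (Fin d) (Fin d) ℝ,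
        trace (Q * (Xt * Xᵀ)) = Stmt5Aux.ip Q (X * Xtᵀ) := by
      intro Q
      rw [Stmt5Aux.trace_mul_eq_ip, transpose_mul, transpose_transpose]
    have hmax : ∀ R : Matrix (Fin d) (Fin d) ℝ, Rᵀ * R = 1 →
        trace (R * S') ≤ trace S' := by
      intro R hR
      have hRQ : (R * Q₀)ᵀ * (R * Q₀) = 1 := by
        rw [transpose_mul, mul_assoc, ← mul_assoc Rᵀ, hR, one_mul, hQ₀]
      have h1 : trace (R * S') = Stmt5Aux.ip (R * Q₀) (X * Xtᵀ) := by
        rw [hS', ← mul_assoc, htrace]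
      have h2 : trace S' = Stmt5Aux.ip Q₀ (X * Xtᵀ) := htrace Q₀
      rw [h1, h2]
      exact hQmax _ hRQ
    have hqf : ∀ w : Fin d → ℝ, 0 ≤ w ⬝ᵥ S'.mulVec w := Stmt5Aux.qf_nonneg S' hmax
    have hsym : S'ᵀ = S' :=
      Stmt5Aux.S_symm S' hqf (fun u v hu hv => Stmt5Aux.double_hh S' hmax hu hv)
    obtain ⟨B, hB⟩ : ∃ B : Matrix (Fin d) (Fin k) ℝ, B = Q₀ * Xt := ⟨_, rfl⟩
    obtain ⟨E, hE⟩ : ∃ E : Matrix (Fin d) (Fin k) ℝ, E = X - B := ⟨_, rfl⟩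
    have hBA : B * Xᵀ = S' := by rw [hB, hS']; exact Matrix.mul_assoc _ _ _
    have hABt : X * Bᵀ = S' := by
      have h1 : (B * Xᵀ)ᵀ = S'ᵀ := by rw [hBA]
      rw [Matrix.transpose_mul, transpose_transpose, hsym] at h1
      exact h1
    have hGram : Bᵀ * B = Xtᵀ * Xt := by
      rw [hB, Matrix.transpose_mul, Matrix.mul_assoc, ← Matrix.mul_assoc Q₀ᵀ, hQ₀, Matrix.one_mul]
    obtain ⟨σ, hσdef⟩ : ∃ σ, σ = sigmaMin X := ⟨_, rfl⟩
    obtain ⟨ε, hεdef⟩ : ∃ ε, ε = frobNorm E := ⟨_, rfl⟩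
    obtain ⟨δ, hδdef⟩ : ∃ δ, δ = frobNorm (Xᵀ * X - Xtᵀ * Xt) := ⟨_, rfl⟩
    rw [← hσdef, ← hδdef] at hclose
    rw [← hσdef, ← hδdef]
    rw [← hσdef] at hσ
    have hρ : rho X Xt ≤ ε := by
      have hbdd : BddBelow {r | ∃ Q : Matrix (Fin d) (Fin d) ℝ, Qᵀ * Q = 1 ∧
          r = frobNorm (X - Q * Xt)} := by
        refine ⟨0, ?_⟩
        rintro r ⟨Q, _, hr⟩
        exact hr ▸ Real.sqrt_nonneg _
      apply csInf_le hbdd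
      exact ⟨Q₀, hQ₀, by rw [hεdef, hE, hB]⟩
    have hε0 : 0 ≤ ε := by rw [hεdef]; exact Real.sqrt_nonneg _
    have hδ0 : 0 ≤ δ := by rw [hδdef]; exact Real.sqrt_nonneg _
    have hε2 : ε^2 = Stmt5Aux.ip E E := by
      rw [hεdef, Stmt5Aux.frob_eq_ip, Real.sq_sqrt (Stmt5Aux.ip_self_nonneg E)]
    have hXBE : X = B + E := by rw [hE]; abel
    have hXt' : Xᵀ = Bᵀ + Eᵀ := by rw [hXBE, transpose_add]
    have hGd : Xᵀ * X - Xtᵀ * Xt = Xᵀ * E + Eᵀ * B := by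
      rw [← hGram, hE]
      simp only [Matrix.mul_sub, Matrix.sub_mul, Matrix.transpose_sub]
      abel
    have hδ2 : δ^2 = Stmt5Aux.ip (Xᵀ * E + Eᵀ * B) (Xᵀ * E + Eᵀ * B) := by
      rw [hδdef, hGd, Stmt5Aux.frob_eq_ip, Real.sq_sqrt (Stmt5Aux.ip_self_nonneg _)]
    -- ######## Lemma A : √2 σ ε ≤ δ + ε² ########
    have hA : Real.sqrt 2 * σ * ε ≤ δ + ε^2 := by
      have hBXE : B = X - E := by rw [hE]; abel
      have hM1M2 : Xᵀ * E + Eᵀ * B = (Xᵀ * E + Eᵀ * X) - Eᵀ * E := by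
        nth_rewrite 1 [hBXE]
        rw [Matrix.mul_sub]
        abel
      have htri : frobNorm (Xᵀ * E + Eᵀ * X) ≤ δ + frobNorm (Eᵀ * E) := by
        have heq : Xᵀ * E + Eᵀ * X = (Xᵀ * E + Eᵀ * B) + Eᵀ * E := by rw [hM1M2]; abel
        calc frobNorm (Xᵀ * E + Eᵀ * X)
            = frobNorm ((Xᵀ * E + Eᵀ * B) + Eᵀ * E) := by rw [← heq]
          _ ≤ frobNorm (Xᵀ * E + Eᵀ * B) + frobNorm (Eᵀ * E) := Stmt5Aux.frob_triangle _ _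
          _ = δ + frobNorm (Eᵀ * E) := by rw [hδdef, hGd]
      have hM2le : frobNorm (Eᵀ * E) ≤ ε^2 := by
        rw [Stmt5Aux.frob_eq_ip, hε2]
        calc Real.sqrt (Stmt5Aux.ip (Eᵀ*E) (Eᵀ*E))
            ≤ Real.sqrt ((Stmt5Aux.ip E E)^2) := Real.sqrt_le_sqrt (Stmt5Aux.gram_cs E)
          _ = Stmt5Aux.ip E E := Real.sqrt_sq (Stmt5Aux.ip_self_nonneg E)
      have hcross : 0 ≤ Stmt5Aux.ip (Xᵀ * E) (Eᵀ * X) := by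
        have hW : (X * Eᵀ)ᵀ = X * Eᵀ := by
          have h1 : X * Eᵀ = X * Xᵀ - S' := by
            rw [hE, Matrix.transpose_sub, Matrix.mul_sub, hABt]
          rw [h1, Matrix.transpose_sub, Matrix.transpose_mul, transpose_transpose, hsym]
        have e1 : Stmt5Aux.ip (E * Xᵀ) (X * Eᵀ) = Stmt5Aux.ip E ((X * Eᵀ) * X) := by
          rw [Stmt5Aux.ip_mul_right, transpose_transpose]
        have hchain : Stmt5Aux.ip (Xᵀ * E) (Eᵀ * X) = Stmt5Aux.ip ((X * Eᵀ)ᵀ) (X * Eᵀ) := by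
          calc Stmt5Aux.ip (Xᵀ * E) (Eᵀ * X)
              = Stmt5Aux.ip E ((X * Eᵀ) * X) := by
                rw [Stmt5Aux.ip_mul_left, transpose_transpose, ← Matrix.mul_assoc]
            _ = Stmt5Aux.ip (E * Xᵀ) (X * Eᵀ) := e1.symm
            _ = Stmt5Aux.ip ((X * Eᵀ)ᵀ) (X * Eᵀ) := by
                rw [Matrix.transpose_mul, transpose_transpose]
        rw [hchain, hW]
        exact Stmt5Aux.ip_self_nonneg _
      have hM1sq : 2 * σ^2 * ε^2 ≤ (frobNorm (Xᵀ * E + Eᵀ * X))^2 := by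
        rw [Stmt5Aux.frob_eq_ip, Real.sq_sqrt (Stmt5Aux.ip_self_nonneg _)]
        have hexp := Stmt5Aux.ip_expand_add (Xᵀ * E) (Eᵀ * X)
        have heqT : Stmt5Aux.ip (Eᵀ * X) (Eᵀ * X) = Stmt5Aux.ip (Xᵀ * E) (Xᵀ * E) := by
          have h0 : (Eᵀ * X)ᵀ = Xᵀ * E := by rw [Matrix.transpose_mul, transpose_transpose]
          rw [← Stmt5Aux.ip_transpose (Eᵀ * X) (Eᵀ * X), h0]
        have hlow := Stmt5Aux.col_lower X E
        rw [← hσdef] at hlow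
        rw [hε2, hexp, heqT]
        linarith [hcross, hlow]
      have hstep : Real.sqrt 2 * σ * ε ≤ frobNorm (Xᵀ * E + Eᵀ * X) := by
        apply Stmt5Aux.le_of_sq_le_sq
          (mul_nonneg (mul_nonneg (Real.sqrt_nonneg 2) hσ.le) hε0)
          (Real.sqrt_nonneg _)
        rw [mul_pow, mul_pow, Real.sq_sqrt (by norm_num : (0:ℝ) ≤ 2)]
        exact hM1sq
      linarith [hstep, htri, hM2le]
    -- ######## Lemma B : σ ε ≤ √2 δ ########
    have hBineq : σ * ε ≤ Real.sqrt 2 * δ := by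
      have hY : (B * Eᵀ)ᵀ = B * Eᵀ := by
        have h1 : B * Eᵀ = S' - B * Bᵀ := by
          rw [hE, Matrix.transpose_sub, Matrix.mul_sub, hBA]
        rw [h1, Matrix.transpose_sub, hsym, Matrix.transpose_mul, transpose_transpose]
      have c5 : Stmt5Aux.ip (Bᵀ*E) (Bᵀ*E) = Stmt5Aux.ip (B*Bᵀ) (E*Eᵀ) := by
        calc Stmt5Aux.ip (Bᵀ*E) (Bᵀ*E) = Stmt5Aux.ip E ((B*Bᵀ)*E) := by
              rw [Stmt5Aux.ip_mul_left, transpose_transpose, ← Matrix.mul_assoc]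
          _ = Stmt5Aux.ip ((B*Bᵀ)*E) E := Stmt5Aux.ip_comm _ _
          _ = Stmt5Aux.ip (B*Bᵀ) (E*Eᵀ) := by rw [Stmt5Aux.ip_mul_right]
      have c1 : Stmt5Aux.ip (Bᵀ*E) (Eᵀ*E) = Stmt5Aux.ip (B*Eᵀ) (E*Eᵀ) := by
        calc Stmt5Aux.ip (Bᵀ*E) (Eᵀ*E) = Stmt5Aux.ip E ((B*Eᵀ)*E) := by
              rw [Stmt5Aux.ip_mul_left, transpose_transpose, ← Matrix.mul_assoc]
          _ = Stmt5Aux.ip ((B*Eᵀ)*E) E := Stmt5Aux.ip_comm _ _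
          _ = Stmt5Aux.ip (B*Eᵀ) (E*Eᵀ) := by rw [Stmt5Aux.ip_mul_right]
      have c4 : Stmt5Aux.ip (Eᵀ*E) (Eᵀ*E) = Stmt5Aux.ip (E*Eᵀ) (E*Eᵀ) := by
        calc Stmt5Aux.ip (Eᵀ*E) (Eᵀ*E) = Stmt5Aux.ip E ((E*Eᵀ)*E) := by
              rw [Stmt5Aux.ip_mul_left, transpose_transpose, ← Matrix.mul_assoc]
          _ = Stmt5Aux.ip ((E*Eᵀ)*E) E := Stmt5Aux.ip_comm _ _
          _ = Stmt5Aux.ip (E*Eᵀ) (E*Eᵀ) := by rw [Stmt5Aux.ip_mul_right]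
      have c3 : Stmt5Aux.ip (Bᵀ*E) (Eᵀ*B) = Stmt5Aux.ip (B*Eᵀ) (B*Eᵀ) := by
        calc Stmt5Aux.ip (Bᵀ*E) (Eᵀ*B) = Stmt5Aux.ip E ((B*Eᵀ)*B) := by
              rw [Stmt5Aux.ip_mul_left, transpose_transpose, ← Matrix.mul_assoc]
          _ = Stmt5Aux.ip ((B*Eᵀ)*B) E := Stmt5Aux.ip_comm _ _
          _ = Stmt5Aux.ip (B*Eᵀ) (E*Bᵀ) := by rw [Stmt5Aux.ip_mul_right]
          _ = Stmt5Aux.ip (B*Eᵀ) (B*Eᵀ) := by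
              rw [show E*Bᵀ = (B*Eᵀ)ᵀ from by rw [Matrix.transpose_mul, transpose_transpose], hY]
      have c2 : Stmt5Aux.ip (Eᵀ*E) (Eᵀ*B) = Stmt5Aux.ip (B*Eᵀ) (E*Eᵀ) := by
        have h0 : Stmt5Aux.ip ((Eᵀ*E)ᵀ) ((Eᵀ*B)ᵀ) = Stmt5Aux.ip (Eᵀ*E) (Eᵀ*B) :=
          Stmt5Aux.ip_transpose _ _
        simp only [Matrix.transpose_mul, transpose_transpose] at h0
        rw [← h0, Stmt5Aux.ip_comm, c1]
      have c6 : Stmt5Aux.ip (Eᵀ*B) (Eᵀ*B) = Stmt5Aux.ip (Bᵀ*E) (Bᵀ*E) := by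
        have h0 : Stmt5Aux.ip ((Eᵀ*B)ᵀ) ((Eᵀ*B)ᵀ) = Stmt5Aux.ip (Eᵀ*B) (Eᵀ*B) :=
          Stmt5Aux.ip_transpose _ _
        simp only [Matrix.transpose_mul, transpose_transpose] at h0
        exact h0.symm
      have hsplit : Xᵀ*E = Bᵀ*E + Eᵀ*E := by rw [hXt', Matrix.add_mul]
      have hδexp : δ^2 = 2*(Stmt5Aux.ip (Bᵀ*E) (Bᵀ*E)) + 4*(Stmt5Aux.ip (B*Eᵀ) (E*Eᵀ))
          + Stmt5Aux.ip (E*Eᵀ) (E*Eᵀ) + 2*(Stmt5Aux.ip (B*Eᵀ) (B*Eᵀ)) := by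
        rw [hδ2, hsplit, Stmt5Aux.ip_expand_add, Stmt5Aux.ip_expand_add,
          Stmt5Aux.ip_add_left, c1, c2, c3, c4, c6]
        ring
      have hAtE : Stmt5Aux.ip (Xᵀ*E) (Xᵀ*E) = Stmt5Aux.ip (Bᵀ*E) (Bᵀ*E)
          + 2*(Stmt5Aux.ip (B*Eᵀ) (E*Eᵀ)) + Stmt5Aux.ip (E*Eᵀ) (E*Eᵀ) := by
        rw [hsplit, Stmt5Aux.ip_expand_add, c1, c4]
      have hSZ : 0 ≤ Stmt5Aux.ip S' (E*Eᵀ) := Stmt5Aux.ip_psd S' hqf E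
      have hsum : Stmt5Aux.ip (B*Bᵀ) (E*Eᵀ) + Stmt5Aux.ip (B*Eᵀ) (E*Eᵀ)
          = Stmt5Aux.ip S' (E*Eᵀ) := by
        rw [← Stmt5Aux.ip_add_left]
        congr 1
        rw [← Matrix.mul_add, ← hXt']
        exact hBA
      have hcs := Stmt5Aux.abs_ip_le (B*Eᵀ) (E*Eᵀ)
      have hyl := (abs_le.mp hcs).1
      have ha2 : (Real.sqrt (Stmt5Aux.ip (B*Eᵀ) (B*Eᵀ)))^2 = Stmt5Aux.ip (B*Eᵀ) (B*Eᵀ) :=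
        Real.sq_sqrt (Stmt5Aux.ip_self_nonneg _)
      have hb2 : (Real.sqrt (Stmt5Aux.ip (E*Eᵀ) (E*Eᵀ)))^2 = Stmt5Aux.ip (E*Eᵀ) (E*Eᵀ) :=
        Real.sq_sqrt (Stmt5Aux.ip_self_nonneg _)
      have ha0 : 0 ≤ Real.sqrt (Stmt5Aux.ip (B*Eᵀ) (B*Eᵀ)) := Real.sqrt_nonneg _
      have hb0 : 0 ≤ Real.sqrt (Stmt5Aux.ip (E*Eᵀ) (E*Eᵀ)) := Real.sqrt_nonneg _
      have hkey : σ^2 * ε^2 ≤ 2*δ^2 := by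
        have hlow := Stmt5Aux.col_lower X E
        rw [← hσdef] at hlow
        have h1 : σ^2 * ε^2 ≤ Stmt5Aux.ip (Xᵀ*E) (Xᵀ*E) := by rw [hε2]; exact hlow
        have hge : 0 ≤ Stmt5Aux.ip (Bᵀ*E) (Bᵀ*E) + Stmt5Aux.ip (B*Eᵀ) (E*Eᵀ) := by
          rw [c5]
          linarith [hsum, hSZ]
        have hquad : 0 ≤ 4*(Stmt5Aux.ip (B*Eᵀ) (B*Eᵀ)) + Stmt5Aux.ip (E*Eᵀ) (E*Eᵀ)
            + 3*(Stmt5Aux.ip (B*Eᵀ) (E*Eᵀ)) := by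
          nlinarith [hyl, ha2, hb2,
            sq_nonneg (2*Real.sqrt (Stmt5Aux.ip (B*Eᵀ) (B*Eᵀ))
              - Real.sqrt (Stmt5Aux.ip (E*Eᵀ) (E*Eᵀ))), mul_nonneg ha0 hb0]
        have h2 : Stmt5Aux.ip (Xᵀ*E) (Xᵀ*E) ≤ 2*δ^2 := by
          rw [hδexp, hAtE]
          linarith [hge, hquad]
        linarith
      apply Stmt5Aux.le_of_sq_le_sq (mul_nonneg hσ.le hε0)
        (mul_nonneg (Real.sqrt_nonneg 2) hδ0)
      rw [mul_pow, mul_pow, Real.sq_sqrt (by norm_num : (0:ℝ) ≤ 2)]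
      exact hkey
    -- ######## final algebra ########
    have hw2 : (Real.sqrt 2)^2 = 2 := Real.sq_sqrt (by norm_num)
    have hw0 : (0:ℝ) < Real.sqrt 2 := Real.sqrt_pos.mpr (by norm_num)
    have harg : 0 ≤ 1 - 2*δ/σ^2 := by
      have h1 : 2*δ/σ^2 ≤ 1 := by
        rw [div_le_one (by positivity)]
        linarith [hclose]
      linarith
    have hs2 : (Real.sqrt (1 - 2*δ/σ^2))^2 = 1 - 2*δ/σ^2 := Real.sq_sqrt harg
    have hs0 : 0 ≤ Real.sqrt (1 - 2*δ/σ^2) := Real.sqrt_nonneg _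
    obtain ⟨s, hsdef⟩ : ∃ s, s = Real.sqrt (1 - 2*δ/σ^2) := ⟨_, rfl⟩
    rw [← hsdef] at hs2 hs0
    obtain ⟨w, hwdef⟩ : ∃ w, w = Real.sqrt 2 := ⟨_, rfl⟩
    rw [← hwdef] at hw2 hw0 hA hBineq
    rw [show (2:ℝ) * δ / σ^2 = 2*δ/σ^2 from rfl, ← hsdef, ← hwdef]
    have hkey1 : σ^2 * (1 - s^2) = 2*δ := by
      rw [hs2]
      field_simp
      ring
    have hwε : w * ε ≤ σ := by
      have h1 : w * (σ * ε) ≤ w * (w * δ) := mul_le_mul_of_nonneg_left hBineq hw0.le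
      have h2 : w * (w*δ) = 2*δ := by rw [show w*(w*δ) = w^2*δ from by ring, hw2]
      have h3 : σ * (w * ε) ≤ σ * σ := by nlinarith [h1, h2, hclose]
      exact le_of_mul_le_mul_left h3 hσ
    have hprod : 0 ≤ (w*ε - σ*(1-s)) * (w*ε - σ*(1+s)) := by
      have hexpand : (w*ε - σ*(1-s)) * (w*ε - σ*(1+s))
          = w^2*ε^2 - 2*σ*(w*ε) + σ^2*(1-s^2) := by ring
      rw [hexpand, hw2, hkey1]
      nlinarith [hA]
    have hσs : 0 ≤ σ * s := mul_nonneg hσ.le hs0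
    have hfinal : w * ε ≤ σ * (1 - s) := by
      rcases le_or_gt (w*ε) (σ*(1-s)) with h | h
      · exact h
      · exfalso
        have hf2 : w*ε - σ*(1+s) ≤ 0 := by linarith [hwε, hσs]
        have h0 : (w*ε - σ*(1-s)) * (w*ε - σ*(1+s)) ≤ 0 :=
          mul_nonpos_iff.mpr (Or.inl ⟨by linarith, hf2⟩)
        have h00 : (w*ε - σ*(1-s)) * (w*ε - σ*(1+s)) = 0 := le_antisymm h0 hprod
        have hf2eq : w*ε - σ*(1+s) = 0 := by
          rcases mul_eq_zero.mp h00 with h1 | h1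
          · exfalso; linarith
          · exact h1
        have hsσ : σ * s ≤ 0 := by linarith [hwε, hf2eq]
        have hprodz : σ * s = 0 := le_antisymm hsσ hσs
        have hs00 : s = 0 := (mul_eq_zero.mp hprodz).resolve_left (ne_of_gt hσ)
        rw [hs00] at hf2eq h
        linarith
    calc rho X Xt ≤ ε := hρ
      _ ≤ σ / w * (1 - s) := by
          rw [div_mul_eq_mul_div, le_div_iff₀ hw0]
          linarith [hfinal]
end
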